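/- arXiv:2110.10796 — 5 statements merged into one kernel-verified Lean document; each statement's English description precedes it below -/
import Mathlib

section
/- The square roots of the squarefree positive integers are linearly independent over $\mathbb{Q}$: if $m_1 < m_2 < \cdots < m_k$ are distinct squarefree positive integers and $q_1, \ldots, q_k \in \mathbb{Q}$ satisfy $\sum_{i=1}^k q_i \sqrt{m_i} = 0$, then $q_1 = \cdots = q_k = 0$. -/
/-!
For a finite set `S` of primes let `K_S = ℚ(√p : p ∈ S) ⊆ ℝ`. By induction on `S`, if `√m ∈ K_S`
then every prime `r ∉ S` divides `m` to an even power: for `q ∉ S`, every element of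
`K_{S ∪ {q}} = K_S(√q)` is `a + b √q` with `a, b ∈ K_S`; squaring `√m = a + b √q` forces `a b = 0`,
and if `a = 0` then `√(m q) = b q ∈ K_S`. In particular `√q ∉ K_S`. The square roots of the
squarefree numbers with prime factors in `S ∪ {q}` are those with prime factors in `S`, which
span a subspace of `K_S`, together with `√q` times them, which span a subspace of `√q K_S`; these
two subspaces meet only in `0`, so linear independence follows by induction on `S`.
-/

namespace Subfield

variable {K : Type*} [Field K] (F : Subfield K) {α : K}

theorem exists_inv_add_mul_eq_add_mul (hα : α ∉ F) (hα2 : α ^ 2 ∈ F) {a b : K} (ha : a ∈ F)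
    (hb : b ∈ F) :
    ∃ c ∈ F, ∃ d ∈ F, (a + b * α)⁻¹ = c + d * α := by
  by_cases hx : a + b * α = 0
  · exact ⟨0, zero_mem F, 0, zero_mem F, by simp [hx]⟩
  set N := a ^ 2 - b ^ 2 * α ^ 2
  have hNmem : N ∈ F := sub_mem (pow_mem ha 2) (mul_mem (pow_mem hb 2) hα2)
  have hN : N ≠ 0 := by
    intro hN
    have hconj : a - b * α = 0 := by
      have : (a + b * α) * (a - b * α) = 0 := by rw [← hN]; ring
      exact (mul_eq_zero.mp this).resolve_left hx
    by_cases hb0 : b = 0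
    · exact hx (by simp_all)
    · refine hα ?_
      rw [show α = a / b by field_simp; linear_combination -hconj]
      exact div_mem ha hb
  refine ⟨a / N, div_mem ha hNmem, -b / N, div_mem (neg_mem hb) hNmem, ?_⟩
  refine inv_eq_of_mul_eq_one_right ?_
  field_simp
  ring

def adjoinOfSqMem (hα : α ∉ F) (hα2 : α ^ 2 ∈ F) : Subfield K where
  carrier := {x | ∃ a ∈ F, ∃ b ∈ F, x = a + b * α}
  zero_mem' := ⟨0, zero_mem F, 0, zero_mem F, by ring⟩
  one_mem' := ⟨1, one_mem F, 0, zero_mem F, by ring⟩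
  add_mem' := by
    rintro _ _ ⟨a, ha, b, hb, rfl⟩ ⟨c, hc, d, hd, rfl⟩
    exact ⟨a + c, add_mem ha hc, b + d, add_mem hb hd, by ring⟩
  neg_mem' := by
    rintro _ ⟨a, ha, b, hb, rfl⟩
    exact ⟨-a, neg_mem ha, -b, neg_mem hb, by ring⟩
  mul_mem' := by
    rintro _ _ ⟨a, ha, b, hb, rfl⟩ ⟨c, hc, d, hd, rfl⟩
    exact ⟨a * c + b * d * α ^ 2, add_mem (mul_mem ha hc) (mul_mem (mul_mem hb hd) hα2),
      a * d + b * c, add_mem (mul_mem ha hd) (mul_mem hb hc), by ring⟩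
  inv_mem' := by
    rintro _ ⟨a, ha, b, hb, rfl⟩
    exact exists_inv_add_mul_eq_add_mul F hα hα2 ha hb

theorem exists_eq_add_mul_of_mem_closure_insert (hα : α ∉ F) (hα2 : α ^ 2 ∈ F) {x : K}
    (hx : x ∈ closure (insert α (F : Set K))) : ∃ a ∈ F, ∃ b ∈ F, x = a + b * α := by
  refine (closure_le (t := adjoinOfSqMem F hα hα2)).mpr ?_ hx
  rintro y (rfl | hy)
  · exact ⟨0, zero_mem F, 1, one_mem F, by ring⟩
  · exact ⟨y, hy, 0, zero_mem F, by ring⟩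

theorem span_rat_subset [CharZero K] (L : Subfield K) {s : Set K} (hs : s ⊆ L) :
    (Submodule.span ℚ s : Set K) ⊆ L := by
  intro x hx
  induction hx using Submodule.span_induction with
  | mem x hx => exact hs hx
  | zero => exact zero_mem L
  | add x y _ _ hx hy => exact add_mem hx hy
  | smul c x _ hx => rw [Rat.smul_def]; exact mul_mem (SubfieldClass.ratCast_mem L c) hx

end Subfield

theorem Nat.even_factorization_of_isSquare {m : ℕ} (hm : IsSquare m) (r : ℕ) :
    Even (m.factorization r) := by
  obtain ⟨t, rfl⟩ := hm
  rw [← sq, Nat.factorization_pow]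
  simp

theorem Nat.setOf_squarefree_primeFactors_subset_insert {q : ℕ} {S : Finset ℕ} (hqS : q ∉ S) :
    {d : ℕ | Squarefree d ∧ d.primeFactors ⊆ insert q S} ⊆
      {d | Squarefree d ∧ d.primeFactors ⊆ S} ∪
        (q * ·) '' {d | Squarefree d ∧ d.primeFactors ⊆ S} := by
  rintro d ⟨hd, hdS⟩
  have hsub : ∀ p ∈ d.primeFactors, p ≠ q → p ∈ S := fun p hp hpq =>
    (Finset.mem_insert.mp (hdS hp)).resolve_left hpq
  by_cases hq : q ∈ d.primeFactors
  · obtain ⟨e, rfl⟩ := Nat.dvd_of_mem_primeFactors hq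
    refine Or.inr ⟨e, ⟨hd.of_mul_right, fun p hp => ?_⟩, rfl⟩
    refine hsub p (Nat.primeFactors_mono (dvd_mul_left e q) hd.ne_zero hp) ?_
    rintro rfl
    exact (Nat.prime_of_mem_primeFactors hq).not_isUnit
      (hd p (mul_dvd_mul_left p (Nat.dvd_of_mem_primeFactors hp)))
  · exact Or.inl ⟨hd, fun p hp => hsub p hp (by rintro rfl; exact hq hp)⟩

theorem Real.sqrt_natCast_mul (a b : ℕ) : √((a * b : ℕ) : ℝ) = √a * √b := by
  push_cast
  exact Real.sqrt_mul (Nat.cast_nonneg a) b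

noncomputable def sqrtField (S : Finset ℕ) : Subfield ℝ :=
  Subfield.closure ((fun p : ℕ => √(p : ℝ)) '' S)

theorem sqrt_mem_sqrtField {S : Finset ℕ} {d : ℕ} (hd : d.primeFactors ⊆ S) :
    √(d : ℝ) ∈ sqrtField S := by
  induction d using induction_on_primes with
  | zero => simp
  | one => simp
  | prime_mul p a hp ih =>
    rcases eq_or_ne a 0 with rfl | ha
    · simp
    rw [Nat.primeFactors_mul hp.ne_zero ha, hp.primeFactors, Finset.union_subset_iff,
      Finset.singleton_subset_iff] at hd
    rw [Real.sqrt_natCast_mul]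
    exact mul_mem (Subfield.subset_closure ⟨p, hd.1, rfl⟩) (ih hd.2)

theorem sqrtField_insert_le (q : ℕ) (S : Finset ℕ) :
    sqrtField (insert q S) ≤ Subfield.closure (insert √(q : ℝ) (sqrtField S : Set ℝ)) := by
  rw [sqrtField, Finset.coe_insert, Set.image_insert_eq]
  exact Subfield.closure_mono (Set.insert_subset_insert Subfield.subset_closure)

theorem sqrtField_empty_le : sqrtField ∅ ≤ (Rat.castHom ℝ).fieldRange := by
  simp [sqrtField]

theorem even_factorization_of_sqrt_mem_sqrtField {S : Finset ℕ} (hS : ∀ p ∈ S, p.Prime) {m : ℕ}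
    (hm : √(m : ℝ) ∈ sqrtField S) {r : ℕ} (hr : r ∉ S) : Even (m.factorization r) := by
  induction S using Finset.induction_on generalizing m r with
  | empty =>
    obtain ⟨s, hs⟩ := RingHom.mem_fieldRange.mp (sqrtField_empty_le hm)
    refine Nat.even_factorization_of_isSquare ?_ r
    by_contra h
    exact (irrational_sqrt_natCast_iff.mpr h) ⟨s, hs⟩
  | @insert q S hqS ih =>
    have hSp : ∀ p ∈ S, p.Prime := fun p hp => hS p (Finset.mem_insert_of_mem hp)
    have hq : q.Prime := hS q (Finset.mem_insert_self q S)
    have hrS : r ∉ S := fun h => hr (Finset.mem_insert_of_mem h)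
    have hrq : r ≠ q := fun h => hr (h ▸ Finset.mem_insert_self q S)
    have hqF : √(q : ℝ) ∉ sqrtField S := fun h => by
      simpa [hq.factorization_self] using ih hSp h hqS
    have hq2 : √(q : ℝ) ^ 2 ∈ sqrtField S := by
      rw [Real.sq_sqrt (Nat.cast_nonneg q)]
      exact natCast_mem _ q
    obtain ⟨a, ha, b, hb, hab⟩ := (sqrtField S).exists_eq_add_mul_of_mem_closure_insert hqF hq2
      (sqrtField_insert_le q S hm)
    -- Squaring `√m = a + b √q` puts `2 a b √q` in `K_S`.
    have hab0 : a * b = 0 := by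
      by_contra h
      apply hqF
      have hm2 := Real.sq_sqrt (Nat.cast_nonneg m : (0 : ℝ) ≤ m)
      have hq2 := Real.sq_sqrt (Nat.cast_nonneg q : (0 : ℝ) ≤ q)
      rw [hab] at hm2
      rw [show √(q : ℝ) = (m - a ^ 2 - b ^ 2 * q) / (2 * (a * b)) by
        rw [eq_div_iff (mul_ne_zero two_ne_zero h)]
        linear_combination hm2 - b ^ 2 * hq2]
      exact div_mem (sub_mem (sub_mem (natCast_mem _ m) (pow_mem ha 2))
        (mul_mem (pow_mem hb 2) (natCast_mem _ q))) (mul_mem (ofNat_mem _ 2) (mul_mem ha hb))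
    rcases mul_eq_zero.mp hab0 with rfl | rfl
    · rcases eq_or_ne m 0 with rfl | hm0
      · simp
      have hmq : √((m * q : ℕ) : ℝ) ∈ sqrtField S := by
        rw [Real.sqrt_natCast_mul, hab, zero_add, mul_assoc, Real.mul_self_sqrt (Nat.cast_nonneg _)]
        exact mul_mem hb (natCast_mem _ q)
      have := ih hSp hmq hrS
      rwa [Nat.factorization_mul hm0 hq.ne_zero, Finsupp.add_apply, hq.factorization,
        Finsupp.single_eq_of_ne hrq, add_zero] at this
    · exact ih hSp (by rwa [hab, zero_mul, add_zero]) hrS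

theorem linearIndepOn_sqrt_of_primeFactors_subset {S : Finset ℕ} (hS : ∀ p ∈ S, p.Prime) :
    LinearIndepOn ℚ (fun d : ℕ => √(d : ℝ)) {d | Squarefree d ∧ d.primeFactors ⊆ S} := by
  induction S using Finset.induction_on with
  | empty =>
    refine LinearIndepOn.mono ((linearIndepOn_singleton_iff ℚ (i := 1)).mpr (by simp))
      fun d hd => ?_
    simpa [hd.1.ne_zero] using hd.2
  | @insert q S hqS ih =>
    set f := fun d : ℕ => √(d : ℝ)
    set A := {d : ℕ | Squarefree d ∧ d.primeFactors ⊆ S}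
    have hq : q.Prime := hS q (Finset.mem_insert_self q S)
    have hSp : ∀ p ∈ S, p.Prime := fun p hp => hS p (Finset.mem_insert_of_mem hp)
    have hA := ih hSp
    have hqF : √(q : ℝ) ∉ sqrtField S := fun h => by
      simpa [hq.factorization_self] using even_factorization_of_sqrt_mem_sqrtField hSp h hqS
    have hq0 : √(q : ℝ) ≠ 0 := Real.sqrt_ne_zero'.mpr (by exact_mod_cast hq.pos)
    have hmul : f ∘ (q * ·) = LinearMap.mulLeft ℚ √(q : ℝ) ∘ f := by
      funext d
      exact Real.sqrt_natCast_mul q d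
    have hspan : (Submodule.span ℚ (f '' A) : Set ℝ) ⊆ sqrtField S :=
      (sqrtField S).span_rat_subset (by rintro _ ⟨d, hd, rfl⟩; exact sqrt_mem_sqrtField hd.2)
    refine LinearIndepOn.mono ?_ (Nat.setOf_squarefree_primeFactors_subset_insert hqS)
    refine hA.union (LinearIndepOn.image_of_comp _ _ ?_) ?_
    · rw [hmul]
      exact hA.map_injOn _ (mul_right_injective₀ hq0).injOn
    · rw [← Set.image_comp, hmul, Set.image_comp, Submodule.span_image, Submodule.disjoint_def]
      rintro _ hx ⟨y, hy, rfl⟩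
      rw [LinearMap.mulLeft_apply] at hx ⊢
      by_contra hxy
      refine hqF ?_
      rw [show √(q : ℝ) = √q * y / y by field_simp [right_ne_zero_of_mul hxy]]
      exact div_mem (hspan hx) (hspan hy)

theorem linearIndepOn_sqrt_squarefree :
    LinearIndepOn ℚ (fun d : ℕ => √(d : ℝ)) {d | Squarefree d} := by
  refine linearIndepOn_of_finite _ fun t ht htfin => ?_
  refine (linearIndepOn_sqrt_of_primeFactors_subset (S := htfin.toFinset.biUnion Nat.primeFactors)
    ?_).mono fun d hd => ⟨ht hd, Finset.subset_biUnion_of_mem _ (htfin.mem_toFinset.mpr hd)⟩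
  intro p hp
  obtain ⟨d, -, hpd⟩ := Finset.mem_biUnion.mp hp
  exact Nat.prime_of_mem_primeFactors hpd

theorem stmt_2_general (k : ℕ) (m : Fin k → ℕ) (hmono : StrictMono m)
    (hsf : ∀ i, Squarefree (m i))
    (q : Fin k → ℚ)
    (hsum : ∑ i, (q i : ℝ) * Real.sqrt (m i) = 0) :
    ∀ i, q i = 0 := by
  have h := linearIndepOn_sqrt_squarefree.comp (fun i => (⟨m i, hsf i⟩ : {d : ℕ | Squarefree d}))
    fun i j hij => hmono.injective (congrArg Subtype.val hij)
  exact Fintype.linearIndependent_iff.mp h q (by simpa [Rat.smul_def] using hsum)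

theorem stmt_2 (k : ℕ) (m : Fin k → ℕ) (hmono : StrictMono m)
    (hsf : ∀ i, Squarefree (m i)) (hpos : ∀ i, 0 < m i)
    (q : Fin k → ℚ)
    (hsum : ∑ i, (q i : ℝ) * Real.sqrt (m i) = 0) :
    ∀ i, q i = 0 :=
  stmt_2_general k m hmono hsf q hsum
end

section
/- Let $X > 0$ and let $m \ne n$ be distinct non-negative integers with $m, n \le 4X^2$. Then the oscillatory integral $I_h(m,n) = \frac{1}{X^4}\int_{\max\{m^2, n^2, X^4\}}^{16X^4} \exp\big(2\pi i h\{(x - m^2)^{1/2} - (x - n^2)^{1/2}\}\big)\,dx$ satisfies $|I_h(m,n)| \ll \frac{X^2}{h\,|m^2 - n^2|}$ for every positive integer $h$, with an absolute implied constant. Moreover $|I_h(m,m)| \le 16$. -/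
open scoped BigOperators
open Real intervalIntegral Set MeasureTheory

set_option maxHeartbeats 1000000

noncomputable def r2 (n : ℕ) : ℕ :=
  Nat.card {p : ℤ × ℤ // p.1 ^ 2 + p.2 ^ 2 = (n : ℤ)}

/-- The oscillatory integral `I_h(m,n)`. -/
noncomputable def oscInt (X : ℝ) (h m n : ℕ) : ℂ :=
  (1 / X ^ 4 : ℂ) *
    ∫ x in (max (max ((m : ℝ) ^ 2) ((n : ℝ) ^ 2)) (X ^ 4))..(16 * X ^ 4),
      Complex.exp (2 * Real.pi * Complex.I * h *
        ((Real.sqrt (x - (m : ℝ) ^ 2) : ℝ) - (Real.sqrt (x - (n : ℝ) ^ 2) : ℝ)))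

lemma sqrt_deriv (P x : ℝ) (hPx : P < x) :
    HasDerivAt (fun y => Real.sqrt (y - P)) (1/(2*Real.sqrt (x-P))) x := by
  simpa [Function.comp_def] using (Real.hasDerivAt_sqrt (ne_of_gt (sub_pos.2 hPx))).comp x
    ((hasDerivAt_id x).sub_const P)

lemma inv_sqrt_deriv (P x : ℝ) (hPx : P < x) :
    HasDerivAt (fun y => 1/(2*Real.sqrt (y - P))) (-(1/(4*Real.sqrt (x-P)^3))) x := by
  have hsp : 0 < Real.sqrt (x - P) := Real.sqrt_pos.2 (sub_pos.2 hPx)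
  have hne : 2*Real.sqrt (x-P) ≠ 0 := by positivity
  have h2 := ((sqrt_deriv P x hPx).const_mul 2).inv hne
  simp only [one_div]
  convert h2 using 1
  · rfl
  · rfl
  · rfl
  field_simp
  ring

lemma core (X : ℝ) (hX : 0 < X) (m n h : ℕ) (hnm : n < m) (hm : (m:ℝ) ≤ 4*X^2)
    (hh : 0 < h) :
    ‖oscInt X h m n‖ ≤ 128 * X^2 / ((h:ℝ) * ((m:ℝ)^2 - (n:ℝ)^2)) := by
  set M : ℝ := (m:ℝ)^2 with hMdef
  set N : ℝ := (n:ℝ)^2 with hNdef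
  have hNM : N < M := by
    have h1 : (n:ℝ) < m := by exact_mod_cast hnm
    have hn0 : (0:ℝ) ≤ n := Nat.cast_nonneg n
    nlinarith
  have hπ := Real.pi_gt_three
  have hh1 : (1:ℝ) ≤ (h:ℝ) := by exact_mod_cast hh
  have hh0 : (0:ℝ) < (h:ℝ) := by linarith
  set A : ℝ := max (max M N) (X^4) with hAdef
  set B : ℝ := 16 * X^4 with hBdef
  have hMB : M ≤ B := by
    have hm0 : (0:ℝ) ≤ m := Nat.cast_nonneg m
    nlinarith
  have hAB : A ≤ B := by
    apply max_le (max_le hMB (le_trans (le_of_lt hNM) hMB))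
    nlinarith
  have hMA : M ≤ A := le_trans (le_max_left M N) (le_max_left _ _)
  set lam : ℝ := (M - N) / (256 * X^6) with hlamdef
  have hlam : 0 < lam := div_pos (by linarith) (by positivity)
  set g : ℝ → ℝ := fun x => Real.sqrt (x - M) - Real.sqrt (x - N) with hgdef
  set G : ℝ → ℝ := fun x => 1/(2*Real.sqrt (x-M)) - 1/(2*Real.sqrt (x-N)) with hGdef
  set G' : ℝ → ℝ := fun x => 1/(4*Real.sqrt (x-N)^3) - 1/(4*Real.sqrt (x-M)^3) with hG'def
  set c : ℂ := 2 * Real.pi * Complex.I * h with hcdef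
  set f : ℝ → ℂ := fun x => Complex.exp (c * (g x : ℝ)) with hfdef
  -- pointwise facts
  have hgd : ∀ x, M < x → HasDerivAt g (G x) x := by
    intro x hx
    exact (sqrt_deriv M x hx).sub (sqrt_deriv N x (lt_trans hNM hx))
  have hGd : ∀ x, M < x → HasDerivAt G (G' x) x := by
    intro x hx
    have h2 := (inv_sqrt_deriv M x hx).sub (inv_sqrt_deriv N x (lt_trans hNM hx))
    convert h2 using 1
    · rfl
    · rfl
    · rfl
    simp only [hG'def]
    ring
  have hs1pos : ∀ x, M < x → 0 < Real.sqrt (x - M) := fun x hx => Real.sqrt_pos.2 (sub_pos.2 hx)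
  have hs2pos : ∀ x, M < x → 0 < Real.sqrt (x - N) :=
    fun x hx => Real.sqrt_pos.2 (sub_pos.2 (lt_trans hNM hx))
  have hsle : ∀ x, M < x → Real.sqrt (x - M) ≤ Real.sqrt (x - N) := by
    intro x hx; exact Real.sqrt_le_sqrt (by linarith)
  have hsub : ∀ x, M < x → x ≤ B → Real.sqrt (x - N) ≤ 4 * X^2 := by
    intro x hx hxB
    rw [show (4*X^2) = Real.sqrt ((4*X^2)^2) from (Real.sqrt_sq (by positivity)).symm]
    apply Real.sqrt_le_sqrt
    have hN0 : 0 ≤ N := by positivity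
    nlinarith
  have hGlow : ∀ x, M < x → x ≤ B → lam ≤ G x := by
    intro x hx hxB
    have h1 := hs1pos x hx
    have h2 := hs2pos x hx
    have h12 := hsle x hx
    have hub2 := hsub x hx hxB
    have hub1 : Real.sqrt (x - M) ≤ 4*X^2 := le_trans h12 hub2
    have e1 : Real.sqrt (x - M)^2 = x - M := Real.sq_sqrt (by linarith)
    have e2 : Real.sqrt (x - N)^2 = x - N := Real.sq_sqrt (by nlinarith)
    have hform : G x = (M - N) /
        (2 * Real.sqrt (x-M) * Real.sqrt (x-N) * (Real.sqrt (x-M) + Real.sqrt (x-N))) := by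
      rw [hGdef]
      field_simp
      linear_combination e2 - e1
    rw [hform, hlamdef]
    apply div_le_div_of_nonneg_left (by linarith)
      (by nlinarith [mul_pos (mul_pos h1 h2) (add_pos h1 h2)])
    nlinarith
  have hGpos : ∀ x, M < x → x ≤ B → 0 < G x := fun x hx hxB => lt_of_lt_of_le hlam (hGlow x hx hxB)
  have hG'nonpos : ∀ x, M < x → G' x ≤ 0 := by
    intro x hx
    have h1 := hs1pos x hx
    have h12 := hsle x hx
    have h3 : 1/(4*Real.sqrt (x-N)^3) ≤ 1/(4*Real.sqrt (x-M)^3) := by gcongr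
    rw [hG'def]
    simp only
    linarith
  have hgcont : Continuous g := by
    apply Continuous.sub <;> exact Real.continuous_sqrt.comp (continuous_id.sub continuous_const)
  have hfcont : Continuous f := by
    apply Complex.continuous_exp.comp
    exact continuous_const.mul (Complex.continuous_ofReal.comp hgcont)
  have hfnorm : ∀ x, ‖f x‖ = 1 := by
    intro x
    have hcx : c * (g x : ℂ) = ((2 * Real.pi * h * g x : ℝ) : ℂ) * Complex.I := by
      rw [hcdef]; push_cast; ring
    rw [hfdef]; simp only [hcx]
    simp [Complex.norm_exp]
  have hGcont : ContinuousOn G (Set.Ioi M) := by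
    apply ContinuousOn.sub
    · exact ContinuousOn.div continuousOn_const
        ((continuous_const.mul (Real.continuous_sqrt.comp
          (continuous_id.sub continuous_const))).continuousOn)
        (fun x hx => by have := hs1pos x hx; positivity)
    · exact ContinuousOn.div continuousOn_const
        ((continuous_const.mul (Real.continuous_sqrt.comp
          (continuous_id.sub continuous_const))).continuousOn)
        (fun x hx => by have := hs2pos x hx; positivity)
  have hG'cont : ContinuousOn G' (Set.Ioi M) := by
    apply ContinuousOn.sub
    · exact ContinuousOn.div continuousOn_const
        ((continuous_const.mul ((Real.continuous_sqrt.comp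
          (continuous_id.sub continuous_const)).pow 3)).continuousOn)
        (fun x hx => by have := hs2pos x hx; positivity)
    · exact ContinuousOn.div continuousOn_const
        ((continuous_const.mul ((Real.continuous_sqrt.comp
          (continuous_id.sub continuous_const)).pow 3)).continuousOn)
        (fun x hx => by have := hs1pos x hx; positivity)
  have key : ∀ a, A < a → a ≤ B → ‖∫ x in a..B, f x‖ ≤ 3 * lam⁻¹ / (2*Real.pi*h) := by
    intro a haA haB
    have hMa : M < a := lt_of_le_of_lt hMA haA
    have hIcc : Set.uIcc a B = Set.Icc a B := Set.uIcc_of_le haB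
    have hmem : ∀ x ∈ Set.uIcc a B, M < x := by
      rw [hIcc]; intro x hx; exact lt_of_lt_of_le hMa hx.1
    have hmemB : ∀ x ∈ Set.uIcc a B, x ≤ B := by rw [hIcc]; exact fun x hx => hx.2
    have hsubIoi : Set.uIcc a B ⊆ Set.Ioi M := fun x hx => hmem x hx
    set u : ℝ → ℂ := fun x => ((G x)⁻¹ : ℝ) with hudef
    set u' : ℝ → ℂ := fun x => ((-G' x / (G x)^2 : ℝ) : ℂ) with hu'def
    have hu : ∀ x ∈ Set.uIcc a B, HasDerivAt u (u' x) x := by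
      intro x hx
      have hGne : G x ≠ 0 := ne_of_gt (hGpos x (hmem x hx) (hmemB x hx))
      exact ((hGd x (hmem x hx)).inv hGne).ofReal_comp
    have hv : ∀ x ∈ Set.uIcc a B, HasDerivAt f (c * (G x : ℂ) * f x) x := by
      intro x hx
      have h2 := (((hgd x (hmem x hx)).ofReal_comp).const_mul c).cexp
      rw [hfdef]
      simp only
      convert h2 using 1
      ring
    have hu'int : IntervalIntegrable u' volume a B := by
      apply ContinuousOn.intervalIntegrable
      apply Complex.continuous_ofReal.comp_continuousOn
      apply ContinuousOn.div ((hG'cont.mono hsubIoi).neg) ((hGcont.mono hsubIoi).pow 2)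
      exact fun x hx => pow_ne_zero 2 (ne_of_gt (hGpos x (hmem x hx) (hmemB x hx)))
    have hv'int : IntervalIntegrable (fun x => c * (G x : ℂ) * f x) volume a B := by
      apply ContinuousOn.intervalIntegrable
      exact (continuousOn_const.mul
        (Complex.continuous_ofReal.comp_continuousOn (hGcont.mono hsubIoi))).mul
        hfcont.continuousOn
    have hIBP := intervalIntegral.integral_mul_deriv_eq_deriv_mul hu hv hu'int hv'int
    have hLHS : (∫ x in a..B, u x * (c * (G x : ℂ) * f x)) = c * ∫ x in a..B, f x := by
      rw [← intervalIntegral.integral_const_mul]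
      apply intervalIntegral.integral_congr
      intro x hx
      have hGne : (G x : ℂ) ≠ 0 :=
        Complex.ofReal_ne_zero.2 (ne_of_gt (hGpos x (hmem x hx) (hmemB x hx)))
      simp only [hudef, Complex.ofReal_inv]
      field_simp
    have hcnorm : ‖c‖ = 2*Real.pi*h := by
      rw [hcdef]
      simp [norm_mul, Complex.norm_real, Real.pi_nonneg]
    have hunorm : ∀ x, M < x → x ≤ B → ‖u x‖ ≤ lam⁻¹ := by
      intro x hx hxB
      have hGx := hGlow x hx hxB
      have hGp := hGpos x hx hxB
      simp only [hudef, Complex.norm_real]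
      rw [Real.norm_eq_abs, abs_of_pos (inv_pos.2 hGp)]
      exact inv_anti₀ hlam hGx
    have hFTC : (∫ x in a..B, (-G' x / (G x)^2)) = (G B)⁻¹ - (G a)⁻¹ := by
      refine intervalIntegral.integral_eq_sub_of_hasDerivAt (f := fun y => (G y)⁻¹) ?_ ?_
      · intro x hx
        have hGne : G x ≠ 0 := ne_of_gt (hGpos x (hmem x hx) (hmemB x hx))
        exact (hGd x (hmem x hx)).inv hGne
      · apply ContinuousOn.intervalIntegrable
        apply ContinuousOn.div ((hG'cont.mono hsubIoi).neg) ((hGcont.mono hsubIoi).pow 2)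
        exact fun x hx => pow_ne_zero 2 (ne_of_gt (hGpos x (hmem x hx) (hmemB x hx)))
    have hMB' : M < B := lt_of_lt_of_le hMa haB
    have hEnd : ‖∫ x in a..B, u' x * f x‖ ≤ lam⁻¹ := by
      calc ‖∫ x in a..B, u' x * f x‖ ≤ ∫ x in a..B, ‖u' x * f x‖ :=
            intervalIntegral.norm_integral_le_integral_norm haB
        _ = ∫ x in a..B, (-G' x / (G x)^2) := by
            apply intervalIntegral.integral_congr
            intro x hx
            dsimp only
            rw [norm_mul, hfnorm, mul_one]
            simp only [hu'def, Complex.norm_real, Real.norm_eq_abs]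
            apply abs_of_nonneg
            apply div_nonneg (by linarith [hG'nonpos x (hmem x hx)]) (sq_nonneg _)
        _ = (G B)⁻¹ - (G a)⁻¹ := hFTC
        _ ≤ (G B)⁻¹ := by
            have := hGpos a hMa haB
            have : 0 ≤ (G a)⁻¹ := by positivity
            linarith
        _ ≤ lam⁻¹ := inv_anti₀ hlam (hGlow B hMB' le_rfl)
    have h3 : ‖c‖ * ‖∫ x in a..B, f x‖ ≤ 3 * lam⁻¹ := by
      rw [← norm_mul, ← hLHS, hIBP]
      calc ‖u B * f B - u a * f a - ∫ x in a..B, u' x * f x‖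
          ≤ ‖u B * f B - u a * f a‖ + ‖∫ x in a..B, u' x * f x‖ := norm_sub_le _ _
        _ ≤ (‖u B * f B‖ + ‖u a * f a‖) + lam⁻¹ := add_le_add (norm_sub_le _ _) hEnd
        _ ≤ (lam⁻¹ * 1 + lam⁻¹ * 1) + lam⁻¹ := by
            rw [norm_mul, norm_mul, hfnorm, hfnorm]
            have h4 := hunorm B hMB' le_rfl
            have h5 := hunorm a hMa haB
            apply add_le_add (add_le_add _ _) le_rfl
            · exact mul_le_mul_of_nonneg_right h4 zero_le_one
            · exact mul_le_mul_of_nonneg_right h5 zero_le_one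
        _ = 3 * lam⁻¹ := by ring
    rw [hcnorm] at h3
    rw [le_div_iff₀ (by positivity)]
    nlinarith [norm_nonneg (∫ x in a..B, f x)]
  have hbig : ‖∫ x in A..B, f x‖ ≤ 3 * lam⁻¹ / (2*Real.pi*h) := by
    rcases eq_or_lt_of_le hAB with hE | hlt
    · rw [← hE, intervalIntegral.integral_same]
      simp only [norm_zero]
      positivity
    · apply le_of_forall_pos_le_add
      intro ε hε
      set a := min (A + ε) B with hadef
      have ha1 : A < a := lt_min (by linarith) hlt
      have ha2 : a ≤ B := min_le_right _ _
      have hsplit : (∫ x in A..a, f x) + (∫ x in a..B, f x) = ∫ x in A..B, f x :=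
        intervalIntegral.integral_add_adjacent_intervals
          (hfcont.intervalIntegrable _ _) (hfcont.intervalIntegrable _ _)
      rw [← hsplit]
      calc ‖(∫ x in A..a, f x) + ∫ x in a..B, f x‖
          ≤ ‖∫ x in A..a, f x‖ + ‖∫ x in a..B, f x‖ := norm_add_le _ _
        _ ≤ 1 * |a - A| + 3 * lam⁻¹ / (2*Real.pi*h) := by
            apply add_le_add _ (key a ha1 ha2)
            exact intervalIntegral.norm_integral_le_of_norm_le_const
              (fun x _ => le_of_eq (hfnorm x))
        _ ≤ 3 * lam⁻¹ / (2*Real.pi*h) + ε := by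
            rw [one_mul, abs_of_nonneg (by linarith : (0:ℝ) ≤ a - A)]
            have haε : a ≤ A + ε := min_le_left _ _
            linarith
  have hosc : oscInt X h m n = (1/(X:ℂ)^4) * ∫ x in A..B, f x := by
    unfold oscInt
    push_cast
    congr 1
    apply intervalIntegral.integral_congr
    intro x _
    rw [hfdef]
    simp only
    congr 1
    rw [hcdef, hgdef]
    push_cast
    ring
  have hXnorm : ‖(1/(X:ℂ)^4)‖ = 1/X^4 := by
    rw [norm_div, norm_one, norm_pow, Complex.norm_real, Real.norm_eq_abs, abs_of_pos hX]
  have hlaminv : lam⁻¹ = 256*X^6/(M-N) := by rw [hlamdef, inv_div]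
  have hMN : 0 < M - N := by linarith
  calc ‖oscInt X h m n‖ = (1/X^4) * ‖∫ x in A..B, f x‖ := by rw [hosc, norm_mul, hXnorm]
    _ ≤ (1/X^4) * (3 * lam⁻¹ / (2*Real.pi*h)) := by
        apply mul_le_mul_of_nonneg_left hbig (by positivity)
    _ = 384 * X^2 / (Real.pi*h*(M-N)) := by
        rw [hlaminv]
        field_simp
        ring
    _ ≤ 128 * X^2 / ((h:ℝ) * (M - N)) := by
        have hd1 : 0 < Real.pi*h*(M-N) :=
          mul_pos (mul_pos Real.pi_pos hh0) hMN
        have hd2 : 0 < (h:ℝ)*(M-N) := mul_pos hh0 hMN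
        rw [div_le_div_iff₀ hd1 hd2]
        nlinarith [mul_pos (mul_pos (pow_pos hX 2) hh0) hMN]

lemma interval_integral_conj (f : ℝ → ℂ) (a b : ℝ) :
    ∫ x in a..b, (starRingEnd ℂ) (f x) = (starRingEnd ℂ) (∫ x in a..b, f x) := by
  simp only [intervalIntegral]
  rw [integral_conj, integral_conj, map_sub]

lemma osc_symm (X : ℝ) (h m n : ℕ) : ‖oscInt X h m n‖ = ‖oscInt X h n m‖ := by
  unfold oscInt
  rw [norm_mul, norm_mul]
  congr 1
  rw [max_comm ((m:ℝ)^2) ((n:ℝ)^2)]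
  have hconj : (∫ x in (max (max ((n:ℝ)^2) ((m:ℝ)^2)) (X^4))..(16*X^4),
      Complex.exp (2 * Real.pi * Complex.I * h *
        ((Real.sqrt (x - (m:ℝ)^2) : ℝ) - (Real.sqrt (x - (n:ℝ)^2) : ℝ))))
      = (starRingEnd ℂ) (∫ x in (max (max ((n:ℝ)^2) ((m:ℝ)^2)) (X^4))..(16*X^4),
      Complex.exp (2 * Real.pi * Complex.I * h *
        ((Real.sqrt (x - (n:ℝ)^2) : ℝ) - (Real.sqrt (x - (m:ℝ)^2) : ℝ)))) := by
    rw [← interval_integral_conj]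
    apply intervalIntegral.integral_congr
    intro x _
    dsimp only
    rw [← Complex.exp_conj]
    congr 1
    simp only [map_mul, map_sub, Complex.conj_I, Complex.conj_ofReal, map_ofNat,
      map_natCast]
    ring
  rw [hconj, RCLike.norm_conj]

lemma osc_diag (X : ℝ) (hX : 0 < X) (m h : ℕ) (hm : (m:ℝ) ≤ 4*X^2) :
    ‖oscInt X h m m‖ ≤ 16 := by
  unfold oscInt
  simp only [sub_self, mul_zero, Complex.exp_zero]
  set A : ℝ := max (max ((m:ℝ)^2) ((m:ℝ)^2)) (X^4) with hA
  have hX4 : (0:ℝ) < X^4 := by positivity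
  have hAge : X^4 ≤ A := le_max_right _ _
  have hm2 : (m:ℝ)^2 ≤ 16*X^4 := by
    have := Nat.cast_nonneg (α := ℝ) m
    nlinarith
  have hAle : A ≤ 16*X^4 := max_le (max_le hm2 hm2) (by nlinarith)
  rw [intervalIntegral.integral_const]
  rw [norm_mul, norm_smul, norm_one, mul_one]
  rw [norm_div, norm_one, norm_pow, Complex.norm_real, Real.norm_eq_abs, abs_of_pos hX]
  rw [Real.norm_eq_abs, abs_of_nonneg (by linarith : (0:ℝ) ≤ 16*X^4 - A)]
  have e : (1/X^4) * X^4 = 1 := by field_simp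
  have hprod : 0 ≤ (1/X^4) * (A - X^4) :=
    mul_nonneg (le_of_lt (by positivity : (0:ℝ) < 1/X^4)) (sub_nonneg.2 hAge)
  nlinarith [e, hprod]

theorem stmt_12 :
    ∃ C : ℝ, 0 < C ∧ ∀ X : ℝ, 0 < X → ∀ m n : ℕ,
      (m : ℝ) ≤ 4 * X ^ 2 → (n : ℝ) ≤ 4 * X ^ 2 → ∀ h : ℕ, 0 < h →
      (m ≠ n →
        ‖oscInt X h m n‖ ≤ C * X ^ 2 / ((h : ℝ) * |(m : ℝ) ^ 2 - (n : ℝ) ^ 2|)) ∧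
      ‖oscInt X h m m‖ ≤ 16 := by
  refine ⟨128, by norm_num, ?_⟩
  intro X hX m n hm hn h hh
  constructor
  · intro hne
    rcases lt_or_gt_of_ne hne with hlt | hgt
    · -- m < n
      have habs : |(m:ℝ)^2 - (n:ℝ)^2| = (n:ℝ)^2 - (m:ℝ)^2 := by
        have : (m:ℝ) < n := by exact_mod_cast hlt
        have h0 : (0:ℝ) ≤ m := Nat.cast_nonneg m
        rw [abs_of_neg (by nlinarith), neg_sub]
      rw [osc_symm, habs]
      exact core X hX n m h hlt hn hh
    · have habs : |(m:ℝ)^2 - (n:ℝ)^2| = (m:ℝ)^2 - (n:ℝ)^2 := by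
        have : (n:ℝ) < m := by exact_mod_cast hgt
        have h0 : (0:ℝ) ≤ n := Nat.cast_nonneg n
        rw [abs_of_pos (by nlinarith)]
      rw [habs]
      exact core X hX m n h hgt hm hh
  · exact osc_diag X hX m h hm
end

section
/- Let $j \ge 2$ be an integer and let $Y \ge 2$. If $e_1, \ldots, e_j \in \{+1, -1\}$ and $m_1, \ldots, m_j$ are positive integers with $m_i \le Y$ for all $i$, and $\sum_{i=1}^j e_i \sqrt{m_i} \ne 0$, then $\big|\sum_{i=1}^j e_i \sqrt{m_i}\big| \gg_j Y^{1/2 - 2^{j-2}}$, where the implied constant depends only on $j$. -/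
open scoped BigOperators

noncomputable def gg {k : ℕ} (t : Fin k → ℝ) (i : Fin k) : (Fin k → Bool) → ℝ :=
  fun s => if s i then t i else - t i

theorem norm_int : ∀ (k : ℕ) (t : Fin k → ℝ), (∀ i, ∃ n : ℤ, t i ^ 2 = (n : ℝ)) →
    ∀ x ∈ Subring.closure (Set.range (gg t)), ∃ N : ℤ, ∏ s : Fin k → Bool, x s = (N : ℝ) := by
  intro k
  induction k with
  | zero =>
    intro t ht x hx
    rw [Set.range_eq_empty, Subring.closure_empty, Subring.mem_bot] at hx
    obtain ⟨n, rfl⟩ := hx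
    exact ⟨n, by simp⟩
  | succ k ih =>
    intro t ht x hx
    obtain ⟨n₀, hn₀⟩ := ht 0
    set t' : Fin k → ℝ := fun i => t i.succ with ht'
    set φ : ((Fin k → Bool) → ℝ) →+* ((Fin (k+1) → Bool) → ℝ) :=
      Pi.ringHom (fun s => Pi.evalRingHom (fun _ : Fin k → Bool => ℝ) (fun i => s i.succ)) with hφ
    have hφ_apply : ∀ (y : (Fin k → Bool) → ℝ) (s : Fin (k+1) → Bool),
        φ y s = y (fun i => s i.succ) := fun y s => rfl
    set S' : Subring ((Fin (k+1) → Bool) → ℝ) :=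
      (Subring.closure (Set.range (gg t'))).map φ with hS'
    set l : (Fin (k+1) → Bool) → ℝ := gg t 0 with hl
    have hll : l * l = ((n₀ : ℤ) : (Fin (k+1) → Bool) → ℝ) := by
      funext s
      simp only [Pi.mul_apply, Pi.intCast_apply, hl, gg]
      rcases s 0 |>.eq_false_or_eq_true with h | h <;> rw [h] <;> simp <;>
        rw [← sq, ← hn₀] <;> ring_nf
    -- decomposition subring
    let T : Subring ((Fin (k+1) → Bool) → ℝ) :=
      { carrier := {z | ∃ u ∈ S', ∃ v ∈ S', z = u + l * v}
        zero_mem' := ⟨0, zero_mem _, 0, zero_mem _, by ring⟩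
        one_mem' := ⟨1, one_mem _, 0, zero_mem _, by ring⟩
        add_mem' := by
          rintro a b ⟨u, hu, v, hv, rfl⟩ ⟨u', hu', v', hv', rfl⟩
          exact ⟨u + u', add_mem hu hu', v + v', add_mem hv hv', by ring⟩
        neg_mem' := by
          rintro a ⟨u, hu, v, hv, rfl⟩
          exact ⟨-u, neg_mem hu, -v, neg_mem hv, by ring⟩
        mul_mem' := by
          rintro a b ⟨u, hu, v, hv, rfl⟩ ⟨u', hu', v', hv', rfl⟩
          refine ⟨u * u' + ((n₀ : ℤ) : (Fin (k+1) → Bool) → ℝ) * (v * v'),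
            add_mem (mul_mem hu hu') (mul_mem (intCast_mem _ _) (mul_mem hv hv')),
            u * v' + u' * v, add_mem (mul_mem hu hv') (mul_mem hu' hv), ?_⟩
          rw [← hll]; ring }
    have hsub : Subring.closure (Set.range (gg t)) ≤ T := by
      rw [Subring.closure_le]
      rintro z ⟨i, rfl⟩
      induction i using Fin.cases with
      | zero => exact ⟨0, zero_mem _, 1, one_mem _, by rw [mul_one, zero_add]⟩
      | succ i' =>
        refine ⟨φ (gg t' i'), ⟨gg t' i', Subring.subset_closure ⟨i', rfl⟩, rfl⟩, 0, zero_mem _, ?_⟩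
        funext s
        simp [hφ_apply, gg, ht']
    obtain ⟨u, hu, v, hv, rfl⟩ := hsub hx
    obtain ⟨u₀, hu₀, rfl⟩ := hu
    obtain ⟨v₀, hv₀, rfl⟩ := hv
    set w : (Fin k → Bool) → ℝ :=
      u₀ * u₀ - ((n₀ : ℤ) : (Fin k → Bool) → ℝ) * (v₀ * v₀) with hw
    have hwmem : w ∈ Subring.closure (Set.range (gg t')) :=
      sub_mem (mul_mem hu₀ hu₀) (mul_mem (intCast_mem _ _) (mul_mem hv₀ hv₀))
    obtain ⟨N, hN⟩ := ih t' (fun i => ht i.succ) w hwmem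
    refine ⟨N, ?_⟩
    rw [← hN]
    have e := (Fin.consEquiv (fun _ : Fin (k+1) => Bool)).symm
    rw [Fintype.prod_equiv (Fin.consEquiv (fun _ : Fin (k+1) => Bool)).symm
      (fun s => (φ u₀ + l * φ v₀) s)
      (fun p => (φ u₀ + l * φ v₀) (Fin.cons p.1 p.2))
      (fun s => by congr 1)]
    rw [Fintype.prod_prod_type (f := fun p : Bool × (Fin k → Bool) =>
      (φ u₀ + l * φ v₀) (Fin.cons p.1 p.2)), Fintype.prod_bool, ← Finset.prod_mul_distrib]
    refine Finset.prod_congr rfl (fun s' _ => ?_)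
    have hcons : ∀ (b : Bool), (fun i : Fin k => (Fin.cons b s' : Fin (k+1) → Bool) i.succ) = s' := by
      intro b; funext i; simp
    simp only [Pi.add_apply, Pi.mul_apply, hφ_apply, hcons, hl, gg, Fin.cons_zero,
      hw, Pi.sub_apply, Pi.intCast_apply]
    simp only [if_true, Bool.false_eq_true, if_false]
    rw [← hn₀]
    ring

noncomputable def bnd (k : ℕ) (Y : ℝ) : ℝ := (((k : ℝ) * Real.sqrt Y) ^ (2 ^ (k - 1) - 1))⁻¹

lemma sqrtY_ge_one {Y : ℝ} (hY : 2 ≤ Y) : 1 ≤ Real.sqrt Y := by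
  rw [show (1:ℝ) = Real.sqrt 1 by simp]
  exact Real.sqrt_le_sqrt (by linarith)

lemma bnd_mono {d k : ℕ} (hd : 1 ≤ d) (hdk : d ≤ k) {Y : ℝ} (hY : 2 ≤ Y) :
    bnd k Y ≤ bnd d Y := by
  have hs := sqrtY_ge_one hY
  have h1 : (1:ℝ) ≤ (d : ℝ) * Real.sqrt Y := by
    have : (1:ℝ) ≤ (d:ℝ) := by exact_mod_cast hd
    nlinarith
  have h2 : (d:ℝ) * Real.sqrt Y ≤ (k:ℝ) * Real.sqrt Y := by
    have : (d:ℝ) ≤ (k:ℝ) := by exact_mod_cast hdk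
    nlinarith
  unfold bnd
  apply inv_anti₀
  · positivity
  · calc ((d:ℝ) * Real.sqrt Y) ^ (2 ^ (d-1) - 1)
        ≤ ((k:ℝ) * Real.sqrt Y) ^ (2 ^ (d-1) - 1) := by
          apply pow_le_pow_left₀ (by linarith) h2
      _ ≤ ((k:ℝ) * Real.sqrt Y) ^ (2 ^ (k-1) - 1) := by
          apply pow_le_pow_right₀ (by linarith)
          exact Nat.sub_le_sub_right (Nat.pow_le_pow_right (by norm_num) (by omega)) 1

lemma aux : ∀ k : ℕ, 1 ≤ k → ∀ Y : ℝ, 2 ≤ Y →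
    ∀ e : Fin k → ℤ, (∀ i, e i = 1 ∨ e i = -1) →
    ∀ m : Fin k → ℕ, (∀ i, 0 < m i) → (∀ i, (m i : ℝ) ≤ Y) →
    (∑ i, (e i : ℝ) * Real.sqrt (m i)) ≠ 0 →
    bnd k Y ≤ |∑ i, (e i : ℝ) * Real.sqrt (m i)| := by
  intro k
  induction k using Nat.strong_induction_on with
  | _ k ih =>
  intro hk Y hY e he m hm hmY hne
  set t : Fin k → ℝ := fun i => Real.sqrt (m i) with htdef
  have ht : ∀ i, ∃ n : ℤ, t i ^ 2 = (n : ℝ) := fun i =>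
    ⟨m i, by rw [htdef]; simp [Real.sq_sqrt (Nat.cast_nonneg (m i))]⟩
  set x : ℝ := ∑ i, (e i : ℝ) * t i with hxdef
  set X : (Fin k → Bool) → ℝ := fun s => ∑ i, (e i : ℝ) * (if s i then t i else - t i)
    with hXdef
  have hXmem : X ∈ Subring.closure (Set.range (gg t)) := by
    have : X = ∑ i, ((e i : ℤ) : (Fin k → Bool) → ℝ) * gg t i := by
      funext s
      rw [Finset.sum_apply]
      exact Finset.sum_congr rfl fun i _ => rfl
    rw [this]
    exact Subring.sum_mem _ fun i _ =>
      Subring.mul_mem _ (intCast_mem _ _) (Subring.subset_closure ⟨i, rfl⟩)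
  obtain ⟨N, hN⟩ := norm_int k t ht X hXmem
  have hs0 : X (fun _ => true) = x := by simp [hXdef, hxdef]
  have hs1 : X (fun _ => false) = -x := by
    simp only [hXdef, hxdef, if_neg, Bool.false_eq_true, if_false]
    rw [← Finset.sum_neg_distrib]
    exact Finset.sum_congr rfl fun i _ => by ring
  have htY : ∀ i, t i ≤ Real.sqrt Y := fun i => Real.sqrt_le_sqrt (hmY i)
  have ht0 : ∀ i, 0 ≤ t i := fun i => Real.sqrt_nonneg _
  have hXbd : ∀ s, |X s| ≤ (k : ℝ) * Real.sqrt Y := by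
    intro s
    calc |X s| ≤ ∑ i, |(e i : ℝ) * (if s i then t i else - t i)| := Finset.abs_sum_le_sum_abs _ _
      _ ≤ ∑ _i : Fin k, Real.sqrt Y := by
          apply Finset.sum_le_sum
          intro i _
          rw [abs_mul]
          have he1 : |(e i : ℝ)| = 1 := by rcases he i with h | h <;> simp [h]
          rw [he1, one_mul]
          rcases (s i).eq_false_or_eq_true with h | h <;>
            simp [h, abs_of_nonneg (ht0 i), htY i]
      _ = (k : ℝ) * Real.sqrt Y := by rw [Finset.sum_const]; simp [mul_comm]
  by_cases hzero : ∀ s, X s ≠ 0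
  · -- direct case
    have hPne : (N : ℝ) ≠ 0 := by
      rw [← hN]; exact Finset.prod_ne_zero_iff.mpr fun s _ => hzero s
    have hNge : (1 : ℝ) ≤ |(N : ℝ)| := by
      have : N ≠ 0 := by exact_mod_cast fun h => hPne (by rw [h]; simp)
      exact_mod_cast Int.one_le_abs (by omega)
    rw [← hN, Finset.abs_prod] at hNge
    set s₀ : Fin k → Bool := fun _ => true
    set s₁ : Fin k → Bool := fun _ => false
    have hs01 : s₀ ≠ s₁ := by
      intro h
      have := congrFun h ⟨0, by omega⟩
      simp [s₀, s₁] at this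
    have hmem1 : s₁ ∈ (Finset.univ : Finset (Fin k → Bool)).erase s₀ :=
      Finset.mem_erase.mpr ⟨hs01.symm, Finset.mem_univ _⟩
    rw [← Finset.mul_prod_erase Finset.univ _ (Finset.mem_univ s₀),
        ← Finset.mul_prod_erase _ _ hmem1] at hNge
    set C : ℝ := (k : ℝ) * Real.sqrt Y with hC
    have hC1 : (1:ℝ) ≤ C := by
      have : (1:ℝ) ≤ (k:ℝ) := by exact_mod_cast hk
      have := sqrtY_ge_one hY
      nlinarith
    have hrest : ∏ s ∈ (Finset.univ.erase s₀).erase s₁, |X s| ≤ C ^ (2 ^ k - 2) := by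
      have hcard : ((Finset.univ.erase s₀).erase s₁).card = 2 ^ k - 2 := by
        rw [Finset.card_erase_of_mem hmem1,
            Finset.card_erase_of_mem (Finset.mem_univ s₀)]
        have : (Finset.univ : Finset (Fin k → Bool)).card = 2 ^ k := by
          simp [Finset.card_univ]
        omega
      calc ∏ s ∈ (Finset.univ.erase s₀).erase s₁, |X s|
          ≤ ∏ _s ∈ (Finset.univ.erase s₀).erase s₁, C :=
            Finset.prod_le_prod (fun s _ => abs_nonneg _) (fun s _ => hXbd s)
        _ = C ^ (2 ^ k - 2) := by rw [Finset.prod_const, hcard]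
    have hprodrest0 : 0 ≤ ∏ s ∈ (Finset.univ.erase s₀).erase s₁, |X s| :=
      Finset.prod_nonneg fun s _ => abs_nonneg _
    have hkey : 1 ≤ |x| * |x| * C ^ (2 ^ k - 2) := by
      rw [hs0, hs1, abs_neg] at hNge
      nlinarith [abs_nonneg x]
    have hexp : C ^ (2 ^ k - 2) = (C ^ (2 ^ (k-1) - 1)) ^ 2 := by
      rw [← pow_mul]
      congr 1
      have h2 : 2 ^ k = 2 * 2 ^ (k - 1) := by
        conv_lhs => rw [show k = (k-1) + 1 by omega]
        ring
      have h1 : 1 ≤ 2 ^ (k-1) := Nat.one_le_two_pow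
      omega
    set B : ℝ := C ^ (2 ^ (k-1) - 1) with hB
    have hB1 : (1:ℝ) ≤ B := one_le_pow₀ hC1
    have hkey2 : 1 ≤ (|x| * B) * (|x| * B) := by rw [hexp] at hkey; nlinarith
    have hxB : 1 ≤ |x| * B := by nlinarith [abs_nonneg x, mul_nonneg (abs_nonneg x) (by linarith : (0:ℝ) ≤ B)]
    show B⁻¹ ≤ |x|
    rw [inv_eq_one_div, div_le_iff₀ (by linarith)]
    linarith
  · -- degenerate case: some conjugate vanishes, reduce
    push_neg at hzero
    obtain ⟨s, hsz⟩ := hzero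
    classical
    set D : Finset (Fin k) := Finset.univ.filter (fun i => s i = false) with hD
    have hxD : x = 2 * ∑ i ∈ D, (e i : ℝ) * t i := by
      have : x - X s = ∑ i, (if s i = false then 2 * ((e i : ℝ) * t i) else 0) := by
        rw [hxdef, hXdef, ← Finset.sum_sub_distrib]
        refine Finset.sum_congr rfl fun i _ => ?_
        rcases (s i).eq_false_or_eq_true with h | h <;> simp [h] <;> ring
      rw [hsz, sub_zero] at this
      rw [this, ← Finset.sum_filter, ← Finset.mul_sum]
    have hDne : D.Nonempty := by
      by_contra h
      rw [Finset.not_nonempty_iff_eq_empty] at h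
      apply hne
      rw [hxD, h]
      simp
    have hDcard : D.card < k := by
      have hle : D.card ≤ k := by simpa using Finset.card_le_univ D
      rcases lt_or_eq_of_le hle with h | h
      · exact h
      · exfalso
        have hDu : D = Finset.univ := Finset.eq_univ_of_card D (by simp [h])
        have hall : ∀ i, s i = false := by
          intro i
          have : i ∈ D := hDu ▸ Finset.mem_univ i
          simpa [hD] using this
        have hXsx : X s = -x := by
          show (∑ i, (e i : ℝ) * (if s i then t i else - t i)) = -x
          rw [hxdef, ← Finset.sum_neg_distrib]
          refine Finset.sum_congr rfl fun i _ => ?_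
          rw [hall i]
          simp
        apply hne
        have : -x = 0 := by rw [← hXsx, hsz]
        linarith
    set d := D.card with hd
    have hd1 : 1 ≤ d := Finset.card_pos.mpr hDne
    set σ : Fin d ≃o {i // i ∈ D} := D.orderIsoOfFin rfl with hσ
    set e' : Fin d → ℤ := fun i => e (σ i) with he'
    set m' : Fin d → ℕ := fun i => m (σ i) with hm'
    have hsum : ∑ i : Fin d, (e' i : ℝ) * Real.sqrt (m' i) = ∑ i ∈ D, (e i : ℝ) * t i := by
      rw [← Finset.sum_coe_sort D (fun a => (e a : ℝ) * t a)]
      exact Equiv.sum_comp σ.toEquiv (fun a : {i // i ∈ D} => (e a : ℝ) * t a)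
    have hsne : ∑ i : Fin d, (e' i : ℝ) * Real.sqrt (m' i) ≠ 0 := by
      rw [hsum]
      intro h
      apply hne
      rw [hxD, h, mul_zero]
    have hIH := ih d hDcard hd1 Y hY e' (fun i => he _) m' (fun i => hm _)
      (fun i => hmY _) hsne
    calc bnd k Y ≤ bnd d Y := bnd_mono hd1 (le_of_lt hDcard) hY
      _ ≤ |∑ i : Fin d, (e' i : ℝ) * Real.sqrt (m' i)| := hIH
      _ ≤ |x| := by
          rw [hsum, hxD, abs_mul, abs_two]
          have := abs_nonneg (∑ i ∈ D, (e i : ℝ) * t i)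
          linarith

theorem stmt_14 (j : ℕ) (hj : 2 ≤ j) :
    ∃ c : ℝ, 0 < c ∧ ∀ Y : ℝ, 2 ≤ Y →
      ∀ e : Fin j → ℤ, (∀ i, e i = 1 ∨ e i = -1) →
      ∀ m : Fin j → ℕ, (∀ i, 0 < m i) → (∀ i, (m i : ℝ) ≤ Y) →
      ∑ i, (e i : ℝ) * Real.sqrt (m i) ≠ 0 →
      c * Y ^ ((1:ℝ)/2 - 2 ^ ((j:ℝ) - 2)) ≤ |∑ i, (e i : ℝ) * Real.sqrt (m i)| := by
  have hj0 : (0:ℝ) < (j:ℝ) := by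
    have : 0 < j := by omega
    exact_mod_cast this
  refine ⟨(((j:ℝ)) ^ (2 ^ (j-1) - 1))⁻¹, by positivity, ?_⟩
  intro Y hY e he m hm hmY hne
  have hb := aux j (by omega) Y hY e he m hm hmY hne
  have heq : (((j:ℝ)) ^ (2 ^ (j-1) - 1))⁻¹ * Y ^ ((1:ℝ)/2 - 2 ^ ((j:ℝ) - 2)) = bnd j Y := by
    have hY0 : (0:ℝ) < Y := by linarith
    unfold bnd
    rw [mul_pow, mul_inv]
    congr 1
    rw [Real.sqrt_eq_rpow, ← Real.rpow_natCast (Y ^ ((1:ℝ)/2)) (2 ^ (j-1) - 1),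
        ← Real.rpow_mul hY0.le, ← Real.rpow_neg hY0.le]
    congr 1
    have hcast : ((2 ^ (j-1) - 1 : ℕ) : ℝ) = 2 ^ (j-1) - 1 := by
      rw [Nat.cast_sub Nat.one_le_two_pow, Nat.cast_pow]
      norm_num
    rw [hcast]
    have hj2 : ((j:ℝ) - 2) = ((j - 2 : ℕ) : ℝ) := by
      rw [Nat.cast_sub hj]
      norm_num
    rw [hj2, Real.rpow_natCast]
    have hpow : (2:ℝ) ^ (j-1) = 2 ^ (j-2) * 2 := by
      rw [← pow_succ]
      congr 1
      omega
    rw [hpow]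
    ring
  rw [heq]
  exact hb
end

section
/- For any nonzero real number $\lambda$ and $X > 0$, $\Big|\frac{1}{X}\int_X^{2X} \cos(2\pi\lambda x)\,dx\Big| \le \frac{1}{\pi |\lambda| X}$; in particular if $e_1, \ldots, e_j = \pm 1$ and $m_1, \ldots, m_j \le Y$ are positive integers with $\lambda = \sum_{i=1}^j e_i\sqrt{m_i} \ne 0$, then $\frac{1}{X}\int_X^{2X}\cos(2\pi\lambda x)\,dx = O_j(X^{-1} Y^{2^{j-2} - 1/2})$, while if $\lambda = 0$ the integral equals $1$. -/
open Polynomial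

open scoped BigOperators


lemma ab (n : ℕ) (p : ℤ[X]) :
    ∃ A B : ℤ[X], ∀ t : ℝ,
      (aeval (t + Real.sqrt n) p = aeval t A + Real.sqrt n * aeval t B) ∧
      (aeval (t - Real.sqrt n) p = aeval t A - Real.sqrt n * aeval t B) := by
  have hs2 : (Real.sqrt n) * (Real.sqrt n) = (n:ℝ) := Real.mul_self_sqrt (by positivity)
  induction p using Polynomial.induction_on with
  | C a =>
    exact ⟨C a, 0, fun t => by simp⟩
  | add p q hp hq =>
    obtain ⟨A1, B1, h1⟩ := hp
    obtain ⟨A2, B2, h2⟩ := hq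
    refine ⟨A1 + A2, B1 + B2, fun t => ?_⟩
    obtain ⟨h1a, h1b⟩ := h1 t
    obtain ⟨h2a, h2b⟩ := h2 t
    constructor <;> simp [h1a, h1b, h2a, h2b] <;> ring
  | monomial k a hp =>
    obtain ⟨A, B, h⟩ := hp
    refine ⟨X * A + C (n:ℤ) * B, A + X * B, fun t => ?_⟩
    obtain ⟨ha, hb⟩ := h t
    have e1 : (aeval (t + Real.sqrt n) (C a * X ^ (k+1)) : ℝ)
        = aeval (t + Real.sqrt n) (C a * X ^ k) * (t + Real.sqrt n) := by
      simp; ring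
    have e2 : (aeval (t - Real.sqrt n) (C a * X ^ (k+1)) : ℝ)
        = aeval (t - Real.sqrt n) (C a * X ^ k) * (t - Real.sqrt n) := by
      simp; ring
    constructor
    · rw [e1, ha]; simp; linear_combination (aeval t B) * hs2
    · rw [e2, hb]; simp; linear_combination (aeval t B) * hs2

lemma prodInt (k : ℕ) (m : Fin k → ℕ) :
    ∃ p : ℤ[X], ∀ t : ℝ, aeval t p
      = ∏ ε : Fin k → Bool, (t + ∑ i, (if ε i then (1:ℝ) else -1) * Real.sqrt (m i)) := by
  induction k with
  | zero => exact ⟨X, fun t => by simp⟩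
  | succ k ih =>
    obtain ⟨p, hp⟩ := ih (m ∘ Fin.succ)
    obtain ⟨A, B, hAB⟩ := ab (m 0) p
    refine ⟨A * A - C ((m 0 : ℤ)) * (B * B), fun t => ?_⟩
    have hs2 : (Real.sqrt (m 0)) * (Real.sqrt (m 0)) = ((m 0 : ℕ):ℝ) :=
      Real.mul_self_sqrt (by positivity)
    have hprod : ∏ ε : Fin (k+1) → Bool, (t + ∑ i, (if ε i then (1:ℝ) else -1) * Real.sqrt (m i))
        = ∏ q : Bool × (Fin k → Bool), (t + ∑ i, (if (Fin.cons q.1 q.2 : Fin (k+1) → Bool) i then (1:ℝ) else -1) * Real.sqrt (m i)) := by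
      apply Fintype.prod_equiv (Fin.consEquiv (fun _ => Bool)).symm
      intro ε
      congr 1
      simp [Fin.consEquiv]
    rw [hprod, Fintype.prod_prod_type, Fintype.prod_bool]
    have hsum : ∀ (b : Bool) (ε : Fin k → Bool),
        (∑ i, (if (Fin.cons b ε : Fin (k+1) → Bool) i then (1:ℝ) else -1) * Real.sqrt (m i))
        = (if b then (1:ℝ) else -1) * Real.sqrt (m 0) + ∑ i, (if ε i then (1:ℝ) else -1) * Real.sqrt ((m ∘ Fin.succ) i) := by
      intro b ε
      rw [Fin.sum_univ_succ]
      simp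
    have h1 : ∏ ε : Fin k → Bool, (t + ∑ i, (if (Fin.cons true ε : Fin (k+1) → Bool) i then (1:ℝ) else -1) * Real.sqrt (m i))
        = aeval (t + Real.sqrt (m 0)) p := by
      rw [hp]
      apply Finset.prod_congr rfl
      intro ε _
      rw [hsum]
      simp; ring
    have h2 : ∏ ε : Fin k → Bool, (t + ∑ i, (if (Fin.cons false ε : Fin (k+1) → Bool) i then (1:ℝ) else -1) * Real.sqrt (m i))
        = aeval (t - Real.sqrt (m 0)) p := by
      rw [hp]
      apply Finset.prod_congr rfl
      intro ε _
      rw [hsum]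
      simp; ring
    rw [h1, h2]
    obtain ⟨ha, hb⟩ := hAB t
    rw [ha, hb]
    simp only [map_sub, map_mul, aeval_C]
    push_cast
    linear_combination (aeval t B : ℝ) * (aeval t B : ℝ) * hs2

lemma nint (k : ℕ) (m : Fin k → ℕ) :
    ∃ N : ℤ, (N:ℝ) = ∏ ε : Fin k → Bool, (∑ i, (if ε i then (1:ℝ) else -1) * Real.sqrt (m i)) := by
  obtain ⟨p, hp⟩ := prodInt k m
  refine ⟨p.coeff 0, ?_⟩
  have := hp 0
  rw [← coeff_zero_eq_aeval_zero'] at this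
  simpa using this

lemma case2 (k : ℕ) (m : Fin (k+1) → ℕ) (Y : ℝ) (hY : 1 ≤ Y) (hmY : ∀ i, (m i : ℝ) ≤ Y)
    (h : ∀ ε : Fin (k+1) → Bool, ε 0 = true →
      (∑ i, (if ε i then (1:ℝ) else -1) * Real.sqrt (m i)) ≠ 0)
    (e : Fin (k+1) → ℤ) (he : ∀ i, e i = 1 ∨ e i = -1) (he0 : e 0 = 1) :
    ((((k:ℝ)+1) * Real.sqrt Y) ^ (2^k - 1 : ℕ))⁻¹ ≤ |∑ i, (e i : ℝ) * Real.sqrt (m i)| := by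
  set s : (Fin (k+1) → Bool) → ℝ := fun ε => ∑ i, (if ε i then (1:ℝ) else -1) * Real.sqrt (m i)
    with hs
  set T : Finset (Fin (k+1) → Bool) := Finset.univ.filter (fun ε => ε 0 = true) with hT
  set F : Finset (Fin (k+1) → Bool) := Finset.univ.filter (fun ε => ¬ (ε 0 = true)) with hF
  have hsY : 1 ≤ Real.sqrt Y := by
    rw [show (1:ℝ) = Real.sqrt 1 by simp]
    exact Real.sqrt_le_sqrt hY
  have hneg : ∀ ε : Fin (k+1) → Bool, s (fun i => !(ε i)) = - s ε := by
    intro ε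
    have hterm : ∀ i : Fin (k+1), (if (!(ε i)) then (1:ℝ) else -1) * Real.sqrt (m i)
        = -((if ε i then (1:ℝ) else -1) * Real.sqrt (m i)) := by
      intro i; cases hb : ε i <;> simp [hb]
    calc s (fun i => !(ε i)) = ∑ i, -((if ε i then (1:ℝ) else -1) * Real.sqrt (m i)) :=
          Finset.sum_congr rfl (fun i _ => hterm i)
      _ = - s ε := by rw [← Finset.sum_neg_distrib]
  have hsb : ∀ ε, |s ε| ≤ ((k:ℝ)+1) * Real.sqrt Y := by
    intro ε
    calc |s ε| ≤ ∑ i, |(if ε i then (1:ℝ) else -1) * Real.sqrt (m i)| :=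
          Finset.abs_sum_le_sum_abs _ _
      _ ≤ ∑ _i : Fin (k+1), Real.sqrt Y := by
          apply Finset.sum_le_sum
          intro i _
          have h1 : |(if ε i then (1:ℝ) else -1)| = 1 := by cases hb : ε i <;> simp
          rw [abs_mul, h1, one_mul, abs_of_nonneg (Real.sqrt_nonneg _)]
          exact Real.sqrt_le_sqrt (hmY i)
      _ = ((k:ℝ)+1) * Real.sqrt Y := by simp [Finset.sum_const]
  have hFT : ∏ ε ∈ F, |s ε| = ∏ ε ∈ T, |s ε| := by
    apply Finset.prod_nbij (fun ε => fun i => !(ε i))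
    · intro ε hε
      simp only [hF, Finset.mem_coe, Finset.mem_filter, Finset.mem_univ, true_and,
        Bool.not_eq_true] at hε
      simp [hT, hε]
    · intro a ha b hb hab
      funext i
      have := congrFun hab i
      simpa using this
    · intro ε hε
      simp only [hT, Finset.mem_coe, Finset.mem_filter, Finset.mem_univ, true_and] at hε
      refine ⟨fun i => !(ε i), ?_, ?_⟩
      · simp [hF, Finset.mem_coe, hε]
      · funext i; simp
    · intro ε _
      rw [hneg, abs_neg]
  obtain ⟨N, hN⟩ := nint (k+1) m
  have hNsplit : (N:ℝ) = (∏ ε ∈ T, s ε) * (∏ ε ∈ F, s ε) := by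
    rw [hN, hT, hF, Finset.prod_filter_mul_prod_filter_not]
  have hNP : |(N:ℝ)| = (∏ ε ∈ T, |s ε|) * (∏ ε ∈ T, |s ε|) := by
    rw [hNsplit, abs_mul, Finset.abs_prod, Finset.abs_prod, hFT]
  have hPa : (0:ℝ) < ∏ ε ∈ T, |s ε| := by
    apply Finset.prod_pos
    intro ε hε
    simp only [hT, Finset.mem_filter, Finset.mem_univ, true_and] at hε
    exact abs_pos.mpr (h ε hε)
  have hNne : N ≠ 0 := by
    intro h0
    rw [h0] at hNP
    simp only [Int.cast_zero, abs_zero] at hNP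
    nlinarith [mul_pos hPa hPa]
  have hN1 : (1:ℝ) ≤ |(N:ℝ)| := by
    have : 1 ≤ |N| := Int.one_le_abs hNne
    exact_mod_cast this
  have hP1 : (1:ℝ) ≤ ∏ ε ∈ T, |s ε| := by
    nlinarith [hNP, hN1, hPa]
  set εe : Fin (k+1) → Bool := fun i => decide (e i = 1) with hεe
  have heT : εe ∈ T := by simp [hT, hεe, he0]
  have hse : s εe = ∑ i, (e i : ℝ) * Real.sqrt (m i) := by
    apply Finset.sum_congr rfl
    intro i _
    rcases he i with h1 | h1 <;> simp [hεe, h1]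
  have hcardT : T.card = 2^k := by
    have hbij : T.card = F.card := by
      rw [hT, hF]
      apply Finset.card_nbij (fun ε => fun i => !(ε i))
      · intro ε hε
        simp only [Finset.mem_coe, Finset.mem_filter, Finset.mem_univ, true_and] at hε ⊢
        simp [hε]
      · intro a ha b hb hab
        funext i
        have := congrFun hab i
        simpa using this
      · intro ε hε
        simp only [Finset.mem_coe, Finset.mem_filter, Finset.mem_univ, true_and,
          Bool.not_eq_true] at hε
        refine ⟨fun i => !(ε i), ?_, ?_⟩
        · simp [hε]
        · funext i; simp
    have htot : T.card + F.card = 2^(k+1) := by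
      rw [hT, hF, Finset.card_filter_add_card_filter_not]
      simp [Fintype.card_fun]
    omega
  have hsplit : ∏ ε ∈ T, |s ε| = |s εe| * ∏ ε ∈ T.erase εe, |s ε| :=
    (Finset.mul_prod_erase T _ heT).symm
  have hrest : ∏ ε ∈ T.erase εe, |s ε| ≤ (((k:ℝ)+1) * Real.sqrt Y) ^ (2^k - 1 : ℕ) := by
    calc ∏ ε ∈ T.erase εe, |s ε| ≤ ∏ _ε ∈ T.erase εe, (((k:ℝ)+1) * Real.sqrt Y) :=
          Finset.prod_le_prod (fun _ _ => abs_nonneg _) (fun ε _ => hsb ε)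
      _ = (((k:ℝ)+1) * Real.sqrt Y) ^ (2^k - 1 : ℕ) := by
          rw [Finset.prod_const, Finset.card_erase_of_mem heT, hcardT]
  have hpow_pos : (0:ℝ) < (((k:ℝ)+1) * Real.sqrt Y) ^ (2^k - 1 : ℕ) := by positivity
  rw [inv_eq_one_div, div_le_iff₀ hpow_pos]
  rw [← hse]
  nlinarith [hP1, hsplit, hrest, abs_nonneg (s εe),
    Finset.prod_nonneg (fun ε (_ : ε ∈ T.erase εe) => abs_nonneg (s ε))]

lemma lowerBound (K : ℕ) : ∃ c : ℝ, 0 < c ∧ ∀ k, k ≤ K → ∀ Y : ℝ, 1 ≤ Y →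
    ∀ e : Fin k → ℤ, (∀ i, e i = 1 ∨ e i = -1) → ∀ m : Fin k → ℕ, (∀ i, 0 < m i) →
    (∀ i, (m i : ℝ) ≤ Y) → (∑ i, (e i : ℝ) * Real.sqrt (m i)) ≠ 0 →
    c * Y ^ ((1:ℝ)/2 - 2^((K:ℝ)-2)) ≤ |∑ i, (e i : ℝ) * Real.sqrt (m i)| := by
  induction K with
  | zero =>
    refine ⟨1, one_pos, ?_⟩
    intro k hk Y hY e he m hm hmY hne
    interval_cases k
    simp at hne
  | succ K ih =>
    obtain ⟨c, hc, ih⟩ := ih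
    set c' : ℝ := min c ((((K:ℝ)+1) ^ (2^K - 1 : ℕ))⁻¹) with hc'def
    have hc'pos : 0 < c' := by
      apply lt_min hc
      positivity
    refine ⟨c', hc'pos, ?_⟩
    intro k hk Y hY e he m hm hmY hne
    have hYpos : (0:ℝ) < Y := lt_of_lt_of_le one_pos hY
    set E1 : ℝ := (1:ℝ)/2 - 2^(((K+1:ℕ):ℝ)-2) with hE1def
    set E0 : ℝ := (1:ℝ)/2 - 2^((K:ℝ)-2) with hE0def
    have hEle : E1 ≤ E0 := by
      rw [hE1def, hE0def]
      have : (2:ℝ) ^ ((K:ℝ)-2) ≤ 2 ^ (((K+1:ℕ):ℝ)-2) := by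
        apply Real.rpow_le_rpow_of_exponent_le one_le_two
        push_cast; linarith
      linarith
    have hEmono : Y ^ E1 ≤ Y ^ E0 := Real.rpow_le_rpow_of_exponent_le hY hEle
    have hE1pos : (0:ℝ) < Y ^ E1 := Real.rpow_pos_of_pos hYpos _
    have hE0pos : (0:ℝ) < Y ^ E0 := Real.rpow_pos_of_pos hYpos _
    rcases Nat.lt_or_ge k (K+1) with hlt | hge
    · -- k ≤ K : use ih
      have := ih k (by omega) Y hY e he m hm hmY hne
      calc c' * Y ^ E1 ≤ c * Y ^ E0 := by
            apply mul_le_mul (min_le_left _ _) hEmono (le_of_lt hE1pos) (le_of_lt hc)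
        _ ≤ _ := this
    · -- k = K + 1
      have hkeq : k = K + 1 := by omega
      subst hkeq
      -- main claim for e with e 0 = 1
      have main : ∀ e : Fin (K+1) → ℤ, (∀ i, e i = 1 ∨ e i = -1) → e 0 = 1 →
          (∑ i, (e i : ℝ) * Real.sqrt (m i)) ≠ 0 →
          c' * Y ^ E1 ≤ |∑ i, (e i : ℝ) * Real.sqrt (m i)| := by
        intro e he he0 hne
        by_cases hall : ∀ ε : Fin (K+1) → Bool, ε 0 = true →
            (∑ i, (if ε i then (1:ℝ) else -1) * Real.sqrt (m i)) ≠ 0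
        · -- all conjugates nonzero
          have hbd := case2 K m Y hY hmY hall e he he0
          have hsY : 1 ≤ Real.sqrt Y := by
            rw [show (1:ℝ) = Real.sqrt 1 by simp]
            exact Real.sqrt_le_sqrt hY
          -- (√Y)^(2^K-1) = Y^(-E1)
          have hYE : Y ^ E1 = ((Real.sqrt Y) ^ (2^K - 1 : ℕ))⁻¹ := by
            rw [Real.sqrt_eq_rpow, ← Real.rpow_natCast (Y ^ ((1:ℝ)/2)) _,
              ← Real.rpow_mul (le_of_lt hYpos), ← Real.rpow_neg (le_of_lt hYpos)]
            congr 1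
            rw [hE1def]
            have h2K : ((2^K - 1 : ℕ) : ℝ) = 2^(K:ℕ) - 1 := by
              have : (1:ℕ) ≤ 2^K := Nat.one_le_two_pow
              push_cast [this]
              ring
            rw [h2K]
            have : (2:ℝ) ^ (((K+1:ℕ):ℝ)-2) = 2^(K:ℕ) / 2 := by
              rw [Real.rpow_sub two_pos]
              push_cast
              rw [Real.rpow_add two_pos, Real.rpow_natCast, Real.rpow_one,
                show (2:ℝ)^(2:ℝ) = 4 by
                  rw [show (2:ℝ) = ((2:ℕ):ℝ) by norm_num, Real.rpow_natCast]; norm_num]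
              ring
            rw [this]
            ring
          calc c' * Y ^ E1 ≤ ((((K:ℝ)+1) ^ (2^K - 1 : ℕ))⁻¹) * Y ^ E1 := by
                apply mul_le_mul_of_nonneg_right (min_le_right _ _) (le_of_lt hE1pos)
            _ = ((((K:ℝ)+1) * Real.sqrt Y) ^ (2^K - 1 : ℕ))⁻¹ := by
                rw [hYE, mul_pow, mul_inv]
            _ ≤ _ := hbd
        · -- some conjugate vanishes: reduction
          push_neg at hall
          obtain ⟨ε, hε0, hεzero⟩ := hall
          set D : Finset (Fin (K+1)) :=
            Finset.univ.filter (fun i => ε i ≠ decide (e i = 1)) with hDdef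
          have hterm : ∀ i : Fin (K+1), ((e i : ℝ) - (if ε i then 1 else -1)) * Real.sqrt (m i)
              = if i ∈ D then 2*(e i : ℝ)*Real.sqrt (m i) else 0 := by
            intro i
            by_cases hi : i ∈ D
            · rw [if_pos hi]
              rw [hDdef, Finset.mem_filter] at hi
              obtain ⟨-, hi⟩ := hi
              rcases he i with h1 | h1 <;> rcases Bool.eq_false_or_eq_true (ε i) with hb | hb
              · rw [h1, hb] at hi; simp at hi
              · rw [h1, hb]; norm_num
              · rw [h1, hb]; norm_num
              · rw [h1, hb] at hi; simp at hi
            · rw [if_neg hi]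
              rw [hDdef, Finset.mem_filter] at hi
              push_neg at hi
              have hii := hi (Finset.mem_univ i)
              rcases he i with h1 | h1 <;> rcases Bool.eq_false_or_eq_true (ε i) with hb | hb
              · rw [h1, hb]; norm_num
              · rw [h1, hb] at hii; simp at hii
              · rw [h1, hb] at hii; simp at hii
              · rw [h1, hb]; norm_num
          have hDsum : ∑ i, (e i : ℝ) * Real.sqrt (m i)
              = 2 * ∑ i ∈ D, (e i : ℝ) * Real.sqrt (m i) := by
            have h1 : ∑ i, (e i : ℝ) * Real.sqrt (m i)
                = ∑ i, ((e i : ℝ) - (if ε i then 1 else -1)) * Real.sqrt (m i) := by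
              rw [show (∑ i, ((e i : ℝ) - (if ε i then 1 else -1)) * Real.sqrt (m i))
                  = ∑ i, ((e i : ℝ) * Real.sqrt (m i) - (if ε i then (1:ℝ) else -1) * Real.sqrt (m i)) by
                apply Finset.sum_congr rfl; intro i _; ring]
              rw [Finset.sum_sub_distrib, hεzero, sub_zero]
            rw [h1]
            rw [show (∑ i, ((e i : ℝ) - (if ε i then 1 else -1)) * Real.sqrt (m i))
                = ∑ i, if i ∈ D then 2*(e i : ℝ)*Real.sqrt (m i) else 0 from
              Finset.sum_congr rfl (fun i _ => hterm i)]
            rw [Finset.sum_ite_mem, Finset.univ_inter, Finset.mul_sum]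
            apply Finset.sum_congr rfl
            intro i _; ring
          have hD0 : (0 : Fin (K+1)) ∉ D := by
            rw [hDdef, Finset.mem_filter]
            push_neg
            intro _
            simp [hε0, he0]
          have hDcard : D.card ≤ K := by
            have hsub : D ⊆ Finset.univ.erase 0 := by
              intro i hi
              apply Finset.mem_erase.mpr
              exact ⟨fun h0 => hD0 (h0 ▸ hi), Finset.mem_univ i⟩
            have := Finset.card_le_card hsub
            rw [Finset.card_erase_of_mem (Finset.mem_univ _)] at this
            simpa using this
          -- reindex
          set d := D.card with hddef
          set φ : Fin d ≃ {x // x ∈ D} := D.equivFin.symm with hφdef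
          set e' : Fin d → ℤ := fun y => e (φ y) with he'def
          set m' : Fin d → ℕ := fun y => m (φ y) with hm'def
          have hsum' : ∑ y, (e' y : ℝ) * Real.sqrt (m' y)
              = ∑ i ∈ D, (e i : ℝ) * Real.sqrt (m i) := by
            rw [he'def, hm'def]
            rw [show (∑ y, (e (φ y) : ℝ) * Real.sqrt (m (φ y)))
                = ∑ x : {x // x ∈ D}, (e x : ℝ) * Real.sqrt (m x) from
              Equiv.sum_comp φ (fun x : {x // x ∈ D} => (e (x:Fin (K+1)) : ℝ) * Real.sqrt (m (x:Fin (K+1))))]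
            exact Finset.sum_coe_sort D (fun i => (e i : ℝ) * Real.sqrt (m i))
          have hne' : ∑ y, (e' y : ℝ) * Real.sqrt (m' y) ≠ 0 := by
            rw [hsum']
            intro h0
            rw [h0, mul_zero] at hDsum
            exact hne hDsum
          have hIH := ih d hDcard Y hY e' (fun y => he (φ y)) m' (fun y => hm (φ y))
            (fun y => hmY (φ y)) hne'
          rw [hsum'] at hIH
          have habs : |∑ i, (e i : ℝ) * Real.sqrt (m i)|
              = 2 * |∑ i ∈ D, (e i : ℝ) * Real.sqrt (m i)| := by
            rw [hDsum, abs_mul]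
            norm_num
          rw [habs]
          calc c' * Y ^ E1 ≤ c * Y ^ E0 := by
                apply mul_le_mul (min_le_left _ _) hEmono (le_of_lt hE1pos) (le_of_lt hc)
            _ ≤ |∑ i ∈ D, (e i : ℝ) * Real.sqrt (m i)| := hIH
            _ ≤ 2 * |∑ i ∈ D, (e i : ℝ) * Real.sqrt (m i)| := by
                nlinarith [abs_nonneg (∑ i ∈ D, (e i : ℝ) * Real.sqrt (m i))]
      rcases he 0 with he0 | he0
      · exact main e he he0 hne
      · have hsumneg : ∑ i, ((-e) i : ℝ) * Real.sqrt (m i)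
            = - ∑ i, (e i : ℝ) * Real.sqrt (m i) := by
          rw [← Finset.sum_neg_distrib]
          apply Finset.sum_congr rfl
          intro i _
          have hne1 : (-e) i = - e i := rfl
          rw [hne1]
          push_cast
          ring
        have h2 := main (-e) (fun i => by rcases he i with h | h <;> simp [h])
          (by simp [he0]) (by rw [hsumneg]; simpa using hne)
        rw [hsumneg, abs_neg] at h2
        exact h2


lemma part1 (lam : ℝ) (hl : lam ≠ 0) (X : ℝ) (hX : 0 < X) :
    |(1 / X) * ∫ x in X..(2 * X), Real.cos (2 * Real.pi * lam * x)|
      ≤ 1 / (Real.pi * |lam| * X) := by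
  have hpi := Real.pi_pos
  have hc : (2 * Real.pi * lam) ≠ 0 := by positivity
  have key : ∫ x in X..(2 * X), Real.cos (2 * Real.pi * lam * x)
      = (Real.sin (2 * Real.pi * lam * (2*X)) - Real.sin (2 * Real.pi * lam * X)) / (2 * Real.pi * lam) := by
    have := intervalIntegral.mul_integral_comp_mul_left (a := X) (b := 2*X)
      (c := 2 * Real.pi * lam) (f := Real.cos)
    rw [integral_cos] at this
    rw [eq_div_iff hc]
    linarith [this]
  rw [key]
  have hs : |Real.sin (2 * Real.pi * lam * (2*X)) - Real.sin (2 * Real.pi * lam * X)| ≤ 2 := by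
    calc |Real.sin (2 * Real.pi * lam * (2*X)) - Real.sin (2 * Real.pi * lam * X)|
        ≤ |Real.sin (2 * Real.pi * lam * (2*X))| + |Real.sin (2 * Real.pi * lam * X)| := abs_sub _ _
      _ ≤ 1 + 1 := by gcongr <;> exact Real.abs_sin_le_one _
      _ = 2 := by norm_num
  have hl' : 0 < |lam| := abs_pos.mpr hl
  have habs : |(1 / X) * ((Real.sin (2 * Real.pi * lam * (2*X)) - Real.sin (2 * Real.pi * lam * X)) / (2 * Real.pi * lam))|
      = (1/X) * (|Real.sin (2 * Real.pi * lam * (2*X)) - Real.sin (2 * Real.pi * lam * X)| / (2 * Real.pi * |lam|)) := by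
    rw [abs_mul, abs_div, abs_div, abs_mul, abs_of_pos (show (0:ℝ) < 2*Real.pi by positivity),
      abs_of_pos hX, abs_one]
  rw [habs]
  rw [le_div_iff₀ (by positivity)]
  calc 1/X * (|Real.sin (2 * Real.pi * lam * (2*X)) - Real.sin (2 * Real.pi * lam * X)| / (2 * Real.pi * |lam|)) * (Real.pi * |lam| * X)
      ≤ 1/X * (2 / (2 * Real.pi * |lam|)) * (Real.pi * |lam| * X) := by gcongr
    _ = 1 := by field_simp

lemma part3 (X : ℝ) (hX : 0 < X) :
    (1 / X) * ∫ x in X..(2 * X), Real.cos (2 * Real.pi * (0:ℝ) * x) = 1 := by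
  simp
  field_simp
  ring


theorem stmt_15 :
    (∀ lam : ℝ, lam ≠ 0 → ∀ X : ℝ, 0 < X →
      |(1 / X) * ∫ x in X..(2 * X), Real.cos (2 * Real.pi * lam * x)|
        ≤ 1 / (Real.pi * |lam| * X)) ∧
    (∀ j : ℕ, 1 ≤ j → ∃ C : ℝ, 0 < C ∧ ∀ Y : ℝ, 2 ≤ Y →
      ∀ e : Fin j → ℤ, (∀ i, e i = 1 ∨ e i = -1) →
      ∀ m : Fin j → ℕ, (∀ i, 0 < m i) → (∀ i, (m i : ℝ) ≤ Y) →
      ∀ X : ℝ, 0 < X →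
      ∑ i, (e i : ℝ) * Real.sqrt (m i) ≠ 0 →
      |(1 / X) * ∫ x in X..(2 * X),
          Real.cos (2 * Real.pi * (∑ i, (e i : ℝ) * Real.sqrt (m i)) * x)|
        ≤ C * X⁻¹ * Y ^ (2 ^ ((j:ℝ) - 2) - (1:ℝ)/2)) ∧
    (∀ X : ℝ, 0 < X →
      (1 / X) * ∫ x in X..(2 * X), Real.cos (2 * Real.pi * (0:ℝ) * x) = 1) := by
  refine ⟨part1, ?_, part3⟩
  intro j hj
  obtain ⟨c, hc, hL⟩ := lowerBound j
  refine ⟨(Real.pi * c)⁻¹, by positivity, ?_⟩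
  intro Y hY e he m hm hmY X hX hne
  have hY1 : (1:ℝ) ≤ Y := by linarith
  have hY0 : (0:ℝ) < Y := by linarith
  set lam := ∑ i, (e i : ℝ) * Real.sqrt (m i) with hlam
  set E : ℝ := (1:ℝ)/2 - 2^((j:ℝ)-2) with hEdef
  have hlow : c * Y ^ E ≤ |lam| := hL j le_rfl Y hY1 e he m hm hmY hne
  have hYE : (0:ℝ) < Y ^ E := Real.rpow_pos_of_pos hY0 _
  have hpi := Real.pi_pos
  have hlampos : 0 < |lam| := abs_pos.mpr hne
  calc |(1 / X) * ∫ x in X..(2 * X), Real.cos (2 * Real.pi * lam * x)|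
      ≤ 1 / (Real.pi * |lam| * X) := part1 lam hne X hX
    _ ≤ 1 / (Real.pi * (c * Y ^ E) * X) := by
        apply div_le_div_of_nonneg_left one_pos.le (by positivity)
        gcongr
    _ = (Real.pi * c)⁻¹ * X⁻¹ * Y ^ (2 ^ ((j:ℝ) - 2) - (1:ℝ)/2) := by
        rw [show (2 ^ ((j:ℝ) - 2) - (1:ℝ)/2) = -E by rw [hEdef]; ring,
          Real.rpow_neg hY0.le]
        field_simp
end

section
/- Suppose $b_1, \ldots, b_k : \mathbb{R} \to \mathbb{C}$ are continuous functions, each periodic of period $1$, and $\gamma_1, \ldots, \gamma_k$ are positive real numbers that are linearly independent over $\mathbb{Q}$. Then $\lim_{X \to \infty} \frac{1}{X}\int_X^{2X} \prod_{i=1}^k b_i(\gamma_i x)\,dx = \prod_{i=1}^k \int_0^1 b_i(t)\,dt$. -/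
open scoped BigOperators
open MeasureTheory Filter Complex Set Submodule Real

instance stmt19FactOne : Fact ((0:ℝ) < 1) := ⟨one_pos⟩

noncomputable section Stmt19Aux

instance stmt19ProbCircle : IsProbabilityMeasure (volume : Measure (AddCircle (1:ℝ))) :=
  ⟨by simp [AddCircle.measure_univ]⟩

def char19 (k : ℕ) (n : Fin k → ℤ) : C((Fin k → AddCircle (1:ℝ)), ℂ) :=
  ∏ i, (fourier (n i)).comp ⟨fun u => u i, continuous_apply i⟩

lemma char19_apply (k : ℕ) (n : Fin k → ℤ) (u : Fin k → AddCircle (1:ℝ)) :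
    char19 k n u = ∏ i, fourier (n i) (u i) := by
  simp [char19]

lemma char19_mul (k : ℕ) (n m : Fin k → ℤ) :
    char19 k n * char19 k m = char19 k (n + m) := by
  ext u
  simp only [ContinuousMap.mul_apply, char19_apply, ← Finset.prod_mul_distrib]
  exact Finset.prod_congr rfl fun i _ => (fourier_add).symm

lemma char19_zero (k : ℕ) : char19 k 0 = 1 := by
  ext u; simp [char19_apply, fourier_zero]

lemma char19_star (k : ℕ) (n : Fin k → ℤ) : star (char19 k n) = char19 k (-n) := by
  ext u
  simp only [ContinuousMap.star_apply, char19_apply, star_prod]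
  refine Finset.prod_congr rfl fun i _ => ?_
  rw [Pi.neg_apply, fourier_neg]
  rfl

def charAlg19 (k : ℕ) : StarSubalgebra ℂ C((Fin k → AddCircle (1:ℝ)), ℂ) where
  toSubalgebra := Algebra.adjoin ℂ (Set.range (char19 k))
  star_mem' := by
    show Algebra.adjoin ℂ (Set.range (char19 k)) ≤
      star (Algebra.adjoin ℂ (Set.range (char19 k)))
    refine Algebra.adjoin_le ?_
    rintro - ⟨n, rfl⟩
    exact Algebra.subset_adjoin ⟨-n, (char19_star k n).symm⟩

lemma charAlg19_coe (k : ℕ) :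
    Subalgebra.toSubmodule (charAlg19 k).toSubalgebra = span ℂ (Set.range (char19 k)) := by
  apply Algebra.adjoin_eq_span_of_subset
  refine Subset.trans ?_ Submodule.subset_span
  intro x hx
  refine Submonoid.closure_induction (fun _ => id) ⟨0, char19_zero k⟩ ?_ hx
  rintro - - - - ⟨m, rfl⟩ ⟨n, rfl⟩
  exact ⟨m + n, (char19_mul k m n).symm⟩

lemma charAlg19_sep (k : ℕ) : (charAlg19 k).SeparatesPoints := by
  intro x y hxy
  obtain ⟨i, hi⟩ := Function.ne_iff.mp hxy
  refine ⟨_, ⟨char19 k (Pi.single i 1), Algebra.subset_adjoin ⟨Pi.single i 1, rfl⟩, rfl⟩, ?_⟩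
  dsimp only
  have hx : ∀ u : Fin k → AddCircle (1:ℝ), char19 k (Pi.single i 1) u = fourier 1 (u i) := by
    intro u
    rw [char19_apply, Finset.prod_eq_single i]
    · rw [Pi.single_eq_same]
    · intro j _ hj; rw [Pi.single_eq_of_ne hj]; exact fourier_zero
    · intro h; exact absurd (Finset.mem_univ i) h
  rw [hx, hx]
  simp only [fourier_one]
  intro h
  rw [Circle.coe_inj] at h
  exact hi (AddCircle.injective_toCircle one_ne_zero h)

lemma span_char19_dense (k : ℕ) :
    (span ℂ (Set.range (char19 k))).topologicalClosure = ⊤ := by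
  rw [← charAlg19_coe]
  exact congr_arg (Subalgebra.toSubmodule <| StarSubalgebra.toSubalgebra ·)
    (ContinuousMap.starSubalgebra_topologicalClosure_eq_top_of_separatesPoints _ (charAlg19_sep k))

lemma char19_comp (k : ℕ) (γ : Fin k → ℝ) (n : Fin k → ℤ) (x : ℝ) :
    char19 k n (fun i => ((γ i * x : ℝ) : AddCircle (1:ℝ)))
      = Complex.exp ((2*(π:ℂ)*((∑ i, (n i : ℝ) * γ i : ℝ):ℂ)*Complex.I) * x) := by
  rw [char19_apply]
  have h : ∀ i : Fin k, fourier (n i) (((γ i * x : ℝ)) : AddCircle (1:ℝ))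
      = Complex.exp (2*(π:ℂ)*Complex.I*(n i)*((γ i * x : ℝ):ℂ)/1) := fun i => fourier_coe_apply
  rw [Finset.prod_congr rfl fun i _ => h i, ← Complex.exp_sum]
  congr 1
  push_cast
  rw [Finset.mul_sum, Finset.sum_mul, Finset.sum_mul]
  refine Finset.sum_congr rfl fun i _ => ?_
  ring

lemma norm_exp_im19 (r x : ℝ) : ‖Complex.exp ((2*(π:ℂ)*(r:ℂ)*Complex.I) * x)‖ = 1 := by
  have h : ((2*(π:ℂ)*(r:ℂ)*Complex.I) * x).re = 0 := by simp
  rw [Complex.norm_exp, h, Real.exp_zero]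

lemma avg_char_ne19 (k : ℕ) (γ : Fin k → ℝ) (n : Fin k → ℤ)
    (hS : (∑ i, (n i : ℝ) * γ i) ≠ 0) :
    Tendsto (fun X : ℝ => (1 / X : ℂ) *
        ∫ x in X..(2*X), char19 k n (fun i => ((γ i * x : ℝ) : AddCircle (1:ℝ))))
      atTop (nhds 0) := by
  set S : ℝ := ∑ i, (n i : ℝ) * γ i with hSdef
  set c : ℂ := 2*(π:ℂ)*(S:ℂ)*Complex.I with hc
  have hc0 : c ≠ 0 := by
    simp [hc, Real.pi_ne_zero, hS, Complex.I_ne_zero, Complex.ofReal_eq_zero]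
  have key : ∀ X : ℝ, (∫ x in X..(2*X), char19 k n (fun i => ((γ i * x : ℝ) : AddCircle (1:ℝ))))
      = (Complex.exp (c * (2*X)) - Complex.exp (c * X)) / c := by
    intro X
    rw [intervalIntegral.integral_congr (fun x _ => char19_comp k γ n x)]
    rw [integral_exp_mul_complex hc0]
    norm_num
  refine squeeze_zero_norm' (a := fun X => (2 / ‖c‖) * (1 / X)) ?_ ?_
  · filter_upwards [eventually_gt_atTop (0:ℝ)] with X hX
    rw [key X, norm_mul, norm_div, norm_div]
    have h1 : ‖Complex.exp (c * (2*X)) - Complex.exp (c * X)‖ ≤ 2 := by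
      refine le_trans (norm_sub_le _ _) ?_
      have e1 : ‖Complex.exp (c * (2*X))‖ = 1 := by
        rw [show c * (2*X) = (2*(π:ℂ)*(S:ℂ)*Complex.I) * ((2*X : ℝ):ℂ) by push_cast [hc]; ring]
        exact norm_exp_im19 S (2*X)
      have e2 : ‖Complex.exp (c * X)‖ = 1 := norm_exp_im19 S X
      rw [e1, e2]; norm_num
    have hX' : ‖(1 : ℂ)‖ / ‖(X : ℂ)‖ = 1 / X := by
      rw [norm_one, Complex.norm_real, Real.norm_of_nonneg hX.le]
    rw [hX']
    have hcpos : (0:ℝ) < ‖c‖ := norm_pos_iff.mpr hc0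
    calc (1/X) * (‖Complex.exp (c * (2*X)) - Complex.exp (c * X)‖ / ‖c‖)
        ≤ (1/X) * (2 / ‖c‖) := by gcongr
      _ = (2 / ‖c‖) * (1 / X) := by ring
  · have h2 : Tendsto (fun X : ℝ => 1 / X) atTop (nhds 0) := by
      simpa using tendsto_inv_atTop_zero (𝕜 := ℝ)
    simpa using h2.const_mul (2 / ‖c‖)

variable {k : ℕ}

def phi19 (k : ℕ) (γ : Fin k → ℝ) (x : ℝ) : Fin k → AddCircle (1:ℝ) :=
  fun i => ((γ i * x : ℝ) : AddCircle (1:ℝ))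

lemma phi19_cont (γ : Fin k → ℝ) : Continuous (phi19 k γ) := by
  refine continuous_pi fun i => ?_
  exact (AddCircle.continuous_mk' 1).comp (continuous_const.mul continuous_id)

lemma comp_cont19 (γ : Fin k → ℝ) (G : C((Fin k → AddCircle (1:ℝ)), ℂ)) :
    Continuous fun x => G (phi19 k γ x) :=
  G.continuous.comp (phi19_cont γ)

lemma int_torus19 (G : C((Fin k → AddCircle (1:ℝ)), ℂ)) :
    Integrable (fun u => G u) volume :=
  G.continuous.integrable_of_hasCompactSupport
    (IsCompact.of_isClosed_subset isCompact_univ isClosed_closure (Set.subset_univ _))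

def Avg19 (k : ℕ) (γ : Fin k → ℝ) (G : C((Fin k → AddCircle (1:ℝ)), ℂ)) (X : ℝ) : ℂ :=
  (1 / X : ℂ) * ∫ x in X..(2*X), G (phi19 k γ x)

def Pp19 (k : ℕ) (γ : Fin k → ℝ) (G : C((Fin k → AddCircle (1:ℝ)), ℂ)) : Prop :=
  Tendsto (Avg19 k γ G) atTop (nhds (∫ u, G u))

lemma integral_char19_ne (n : Fin k → ℤ) (j : Fin k) (hj : n j ≠ 0) :
    (∫ u : Fin k → AddCircle (1:ℝ), char19 k n u) = 0 := by
  have h1 : (∫ u : Fin k → AddCircle (1:ℝ), char19 k n u)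
      = ∫ u : Fin k → AddCircle (1:ℝ), ∏ i, fourier (n i) (u i) := by
    refine integral_congr_ae (Eventually.of_forall fun u => char19_apply k n u)
  rw [h1, volume_pi, integral_fintype_prod_eq_prod (fun i x => fourier (n i) x)]
  refine Finset.prod_eq_zero (Finset.mem_univ j) ?_
  -- ∫ fourier (n j) = 0
  rw [← AddCircle.intervalIntegral_preimage (1:ℝ) 0 (fourier (n j))]
  have h : ∀ x : ℝ, fourier (n j) (x : AddCircle (1:ℝ))
      = Complex.exp ((2*(π:ℂ)*Complex.I*(n j)) * x) := by
    intro x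
    rw [fourier_coe_apply]
    norm_num
  rw [intervalIntegral.integral_congr (fun x _ => h x)]
  rw [integral_exp_mul_complex (by simp [Real.pi_ne_zero, hj, Complex.I_ne_zero])]
  have : Complex.exp (2*(π:ℂ)*Complex.I*(n j) * ((0:ℝ)+1:ℝ)) = 1 := by
    rw [show 2*(π:ℂ)*Complex.I*(n j) * (((0:ℝ)+1:ℝ):ℂ) = (n j : ℤ) * (2*(π:ℂ)*Complex.I) by
      push_cast; ring]
    exact Complex.exp_int_mul_two_pi_mul_I (n j)
  rw [this]
  simp

lemma Pp19_char (γ : Fin k → ℝ)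
    (hind : ∀ q : Fin k → ℚ, ∑ i, (q i : ℝ) * γ i = 0 → ∀ i, q i = 0)
    (n : Fin k → ℤ) : Pp19 k γ (char19 k n) := by
  by_cases hn : n = 0
  · subst hn
    rw [Pp19, char19_zero]
    have hint : (∫ u : Fin k → AddCircle (1:ℝ), (1 : C((Fin k → AddCircle (1:ℝ)), ℂ)) u) = 1 := by
      simp
    rw [hint]
    have heq : (fun _ : ℝ => (1:ℂ)) =ᶠ[atTop] Avg19 k γ 1 := by
      filter_upwards [eventually_gt_atTop (0:ℝ)] with X hX
      have hX0 : (X : ℂ) ≠ 0 := by exact_mod_cast hX.ne'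
      have : Avg19 k γ 1 X = 1 := by
        simp only [Avg19, ContinuousMap.one_apply, intervalIntegral.integral_const]
        rw [show ((2*X - X : ℝ)) • (1:ℂ) = ((X:ℝ):ℂ) by push_cast [Complex.real_smul]; ring]
        field_simp
      exact this.symm
    exact Tendsto.congr' heq tendsto_const_nhds
  · have hS : (∑ i, (n i : ℝ) * γ i) ≠ 0 := by
      intro h0
      apply hn
      funext i
      have := hind (fun i => (n i : ℚ)) (by push_cast; exact_mod_cast h0) i
      exact_mod_cast this
    obtain ⟨j, hj⟩ := Function.ne_iff.mp hn
    rw [Pp19, integral_char19_ne n j hj]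
    exact avg_char_ne19 k γ n hS

lemma Pp19_zero (γ : Fin k → ℝ) : Pp19 k γ 0 := by
  have h : ∀ X : ℝ, Avg19 k γ 0 X = 0 := by
    intro X; simp [Avg19]
  rw [Pp19]
  simp only [ContinuousMap.coe_zero, Pi.zero_apply, integral_zero]
  exact Tendsto.congr (fun X => (h X).symm) tendsto_const_nhds

lemma Pp19_add (γ : Fin k → ℝ) {G H : C((Fin k → AddCircle (1:ℝ)), ℂ)}
    (hG : Pp19 k γ G) (hH : Pp19 k γ H) : Pp19 k γ (G + H) := by
  have key : ∀ X : ℝ, Avg19 k γ (G + H) X = Avg19 k γ G X + Avg19 k γ H X := by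
    intro X
    simp only [Avg19, ContinuousMap.add_apply]
    rw [intervalIntegral.integral_add ((comp_cont19 γ G).intervalIntegrable _ _)
      ((comp_cont19 γ H).intervalIntegrable _ _)]
    ring
  have hint : (∫ u, (G + H) u) = (∫ u, G u) + ∫ u, H u := by
    simp only [ContinuousMap.add_apply]
    exact integral_add (int_torus19 G) (int_torus19 H)
  rw [Pp19, hint]
  exact Tendsto.congr (fun X => (key X).symm) (hG.add hH)

lemma Pp19_smul (γ : Fin k → ℝ) (c : ℂ) {G : C((Fin k → AddCircle (1:ℝ)), ℂ)}
    (hG : Pp19 k γ G) : Pp19 k γ (c • G) := by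
  have key : ∀ X : ℝ, Avg19 k γ (c • G) X = c • Avg19 k γ G X := by
    intro X
    simp only [Avg19, ContinuousMap.smul_apply]
    rw [intervalIntegral.integral_smul]
    simp [smul_eq_mul]; ring
  have hint : (∫ u, (c • G) u) = c • ∫ u, G u := by
    simp only [ContinuousMap.smul_apply]
    exact integral_smul c _
  rw [Pp19, hint]
  exact Tendsto.congr (fun X => (key X).symm) (hG.const_smul c)

lemma Pp19_span (γ : Fin k → ℝ)
    (hind : ∀ q : Fin k → ℚ, ∑ i, (q i : ℝ) * γ i = 0 → ∀ i, q i = 0)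
    {Q : C((Fin k → AddCircle (1:ℝ)), ℂ)} (hQ : Q ∈ span ℂ (Set.range (char19 k))) :
    Pp19 k γ Q := by
  refine span_induction ?_ ?_ ?_ ?_ hQ
  · rintro - ⟨n, rfl⟩
    exact Pp19_char γ hind n
  · exact Pp19_zero γ
  · intro x y _ _ hx hy; exact Pp19_add γ hx hy
  · intro c x _ hx; exact Pp19_smul γ c hx

lemma Pp19_all (γ : Fin k → ℝ)
    (hind : ∀ q : Fin k → ℚ, ∑ i, (q i : ℝ) * γ i = 0 → ∀ i, q i = 0)
    (G : C((Fin k → AddCircle (1:ℝ)), ℂ)) : Pp19 k γ G := by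
  rw [Pp19, Metric.tendsto_nhds]
  intro ε hε
  have hG : G ∈ closure ((span ℂ (Set.range (char19 k)) : Submodule ℂ _) :
      Set C((Fin k → AddCircle (1:ℝ)), ℂ)) := by
    have h : G ∈ (span ℂ (Set.range (char19 k))).topologicalClosure := by
      rw [span_char19_dense k]; exact Submodule.mem_top
    exact h
  obtain ⟨Q, hQmem, hdist⟩ := Metric.mem_closure_iff.mp hG (ε/4) (by positivity)
  have hQ : Pp19 k γ Q := Pp19_span γ hind hQmem
  filter_upwards [eventually_gt_atTop (0:ℝ),
      (Metric.tendsto_nhds.mp hQ) (ε/4) (by positivity)] with X hX h2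
  have hA : dist (Avg19 k γ G X) (Avg19 k γ Q X) ≤ dist G Q := by
    rw [dist_eq_norm]
    have hint : Avg19 k γ G X - Avg19 k γ Q X
        = (1/X : ℂ) * ∫ x in X..(2*X), (G (phi19 k γ x) - Q (phi19 k γ x)) := by
      rw [Avg19, Avg19, intervalIntegral.integral_sub ((comp_cont19 γ G).intervalIntegrable _ _)
        ((comp_cont19 γ Q).intervalIntegrable _ _)]
      ring
    rw [hint, norm_mul]
    have h1 : ‖(1/X : ℂ)‖ = 1/X := by
      rw [norm_div, norm_one, Complex.norm_real, Real.norm_of_nonneg hX.le]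
    have hb : ‖∫ x in X..(2*X), (G (phi19 k γ x) - Q (phi19 k γ x))‖ ≤ dist G Q * |2*X - X| := by
      refine intervalIntegral.norm_integral_le_of_norm_le_const fun x _ => ?_
      rw [← dist_eq_norm]
      exact ContinuousMap.dist_apply_le_dist _
    have habs : |2*X - X| = X := by
      rw [show 2*X - X = X by ring, abs_of_pos hX]
    rw [habs] at hb
    calc ‖(1/X:ℂ)‖ * ‖∫ x in X..(2*X), (G (phi19 k γ x) - Q (phi19 k γ x))‖
        ≤ (1/X) * (dist G Q * X) := by rw [h1]; gcongr
      _ = dist G Q := by field_simp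
  have hB : dist (∫ u, Q u) (∫ u, G u) ≤ dist G Q := by
    rw [dist_eq_norm, ← integral_sub (int_torus19 Q) (int_torus19 G)]
    have := norm_integral_le_of_norm_le_const (μ := volume) (C := dist G Q)
      (f := fun u => Q u - G u) (Eventually.of_forall fun u => by
        rw [← dist_eq_norm, dist_comm]
        exact ContinuousMap.dist_apply_le_dist u)
    simpa using this
  have htri := dist_triangle4 (Avg19 k γ G X) (Avg19 k γ Q X) (∫ u, Q u) (∫ u, G u)
  linarith [hA, hB, h2, hdist]

end Stmt19Aux

theorem stmt_19 (k : ℕ) (b : Fin k → ℝ → ℂ)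
    (hb : ∀ i, Continuous (b i)) (hper : ∀ i t, b i (t + 1) = b i t)
    (γ : Fin k → ℝ) (hγpos : ∀ i, 0 < γ i)
    (hind : ∀ q : Fin k → ℚ, ∑ i, (q i : ℝ) * γ i = 0 → ∀ i, q i = 0) :
    Filter.Tendsto
      (fun X : ℝ => (1 / X : ℂ) * ∫ x in X..(2 * X), ∏ i, b i (γ i * x))
      Filter.atTop
      (nhds (∏ i, ∫ t in (0:ℝ)..1, b i t)) := by
  have hperiodic : ∀ i, Function.Periodic (b i) 1 := fun i t => hper i t
  let f : Fin k → (AddCircle (1:ℝ) → ℂ) := fun i => (hperiodic i).lift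
  have hfc : ∀ i, Continuous (f i) := fun i => Continuous.quotient_liftOn' (hb i) _
  let G : C((Fin k → AddCircle (1:ℝ)), ℂ) :=
    ⟨fun u => ∏ i, f i (u i),
      continuous_finset_prod _ fun i _ => (hfc i).comp (continuous_apply i)⟩
  have hPp := Pp19_all γ hind G
  have hfun : (fun X : ℝ => (1 / X : ℂ) * ∫ x in X..(2 * X), ∏ i, b i (γ i * x))
      = Avg19 k γ G := by
    funext X
    rw [Avg19]
    congr 1
  have hint : (∫ u, G u) = ∏ i, ∫ t in (0:ℝ)..1, b i t := by
    have h1 : (∫ u : Fin k → AddCircle (1:ℝ), ∏ i, f i (u i))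
        = ∏ i, ∫ x : AddCircle (1:ℝ), f i x :=
      integral_fintype_prod_eq_prod (fun i x => f i x)
    rw [show (∫ u, G u) = ∫ u : Fin k → AddCircle (1:ℝ), ∏ i, f i (u i) from rfl, h1]
    refine Finset.prod_congr rfl fun i _ => ?_
    rw [← AddCircle.intervalIntegral_preimage (1:ℝ) 0 (f i)]
    rw [zero_add]
    refine intervalIntegral.integral_congr fun x _ => Function.Periodic.lift_coe (hperiodic i) x
  rw [hfun, ← hint]
  exact hPp
end
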